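/- arXiv:2307.03568 — 4 statements merged into one kernel-verified Lean document; each statement's English description precedes it below -/
import Mathlib

section
/- Fix T > 0, a continuous T-periodic control u : ℝ → ℝ^m, a point x₀ ∈ Ω, and a solution x : [0,T] → Ω of the bilinear control system with control u and x(0) = x₀. Let Φ(t;s) denote the transfer matrix along (x, u). Suppose there are r, d > 0, a compact set K ⊆ Ω, and a map X assigning to each Δu ∈ Z with ‖Δu‖_Z < r a solution X(Δu) : [0,T] → Ω of the system with control u + Δu and X(Δu)(0) = x₀, such that X(Δu)(t) ∈ K and |X(Δu)(t) − x(t)| ≤ d·‖Δu‖_Z for all t ∈ [0,T], and X(0) = x. For Δu ∈ Z define z_{Δu}(t) := ∫₀ᵗ Φ(t;s)·( M(x(s)) + Df(u(s)) )·Δu(s) ds, where Df is the Jacobian of f. Then sup_{t∈[0,T]} |X(Δu)(t) − x(t) − z_{Δu}(t)| = o(‖Δu‖_Z) as Δu → 0 in Z; in particular, for each t ∈ [0,T], the map Δu ↦ X(Δu)(t) is Fréchet differentiable at 0 with derivative given by the bounded linear operator Δu ↦ z_{Δu}(t). -/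
open Set

/-- A solution of the bilinear control system `x' = f(u(t)) + M(x(t))·u(t)`
with state in `Ω`, on the set `I ⊆ ℝ`. -/
def IsBilinearSolutionOn {n m : ℕ}
    (f : (Fin m → ℝ) → (Fin n → ℝ))
    (M : (Fin n → ℝ) → ((Fin m → ℝ) →L[ℝ] (Fin n → ℝ)))
    (Ω : Set (Fin n → ℝ))
    (u : ℝ → (Fin m → ℝ)) (x : ℝ → (Fin n → ℝ)) (I : Set ℝ) : Prop :=
  ∀ t ∈ I, x t ∈ Ω ∧ HasDerivWithinAt x (f (u t) + M (x t) (u t)) I t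

/-!
Write `δ = X(Δu) - x`. It solves `δ' = A(t) δ + B(t) Δu + R(t)`, where `A(t) h + B(t) w` is the
derivative of the field `(x, u) ↦ f u + M x u` at `(x(t), u(t))` and `R` is its first-order
Taylor remainder. Uniform Taylor estimates on the compact set `x([0,T]) × u([0,T])`, together
with the a priori bound `‖δ‖ ≤ d ‖Δu‖`, give `R = o(‖Δu‖)` uniformly in `t`. The
variation-of-constants integral `z(t) = ∫₀ᵗ Φ(t;s) B(s) Δu(s) ds` solves `z' = A z + B Δu`: the
cocycle identity `Φ(t;s) = Φ(t;0) Φ(0;s)` separates the two time variables. Grönwall's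
inequality then bounds `δ - z` by a constant multiple of `sup ‖R‖`.
-/

open scoped NNReal

section Calculus

variable {E F : Type*} [NormedAddCommGroup E] [NormedSpace ℝ E]
  [NormedAddCommGroup F] [NormedSpace ℝ F]

theorem ContDiffOn.exists_forall_norm_sub_sub_fderiv_le [ProperSpace E] {g : E → F} {U : Set E}
    (hU : IsOpen U) (hg : ContDiffOn ℝ 1 g U) {C : Set E} (hC : IsCompact C) (hCU : C ⊆ U)
    {ε : ℝ} (hε : 0 < ε) :
    ∃ δ > 0, ∀ a ∈ C, ∀ b, ‖b - a‖ < δ →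
      ‖g b - g a - fderiv ℝ g a (b - a)‖ ≤ ε * ‖b - a‖ := by
  obtain ⟨ρ, hρ, hρU⟩ := hC.exists_cthickening_subset_open hU hCU
  obtain ⟨η, hη, hclose⟩ := Metric.uniformContinuousOn_iff.1
    (hC.cthickening.uniformContinuousOn_of_continuous
      ((hg.continuousOn_fderiv_of_isOpen hU le_rfl).mono hρU)) ε hε
  refine ⟨min η ρ, lt_min hη hρ, fun a ha b hb => ?_⟩
  have hball : Metric.ball a (min η ρ) ⊆ Metric.cthickening ρ C := fun p hp =>
    Metric.mem_cthickening_of_dist_le p a ρ C ha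
      ((Metric.mem_ball.1 hp).le.trans (min_le_right _ _))
  have ha' : a ∈ Metric.ball a (min η ρ) := Metric.mem_ball_self (lt_min hη hρ)
  refine (convex_ball a _).norm_image_sub_le_of_norm_hasFDerivWithin_le' (f' := fderiv ℝ g)
    (fun p hp => ?_) (fun p hp => ?_) ha' (by rwa [Metric.mem_ball, dist_eq_norm])
  · exact ((hg.differentiableOn one_ne_zero).differentiableAt
      (hU.mem_nhds (hρU (hball hp)))).hasFDerivAt.hasFDerivWithinAt
  · rw [← dist_eq_norm]
    exact (hclose p (hball hp) a (hball ha')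
      ((Metric.mem_ball.1 hp).trans_le (min_le_left _ _))).le

theorem ContinuousOn.hasDerivWithinAt_integral_Icc [CompleteSpace F] {g : ℝ → F} {a b t : ℝ}
    (hg : ContinuousOn g (Icc a b)) (ht : t ∈ Icc a b) :
    HasDerivWithinAt (fun τ => ∫ s in a..τ, g s) (g t) (Icc a b) t := by
  have : Fact (t ∈ Icc a b) := ⟨ht⟩
  refine intervalIntegral.integral_hasDerivWithinAt_right ?_
    ⟨Icc a b, self_mem_nhdsWithin, hg.aestronglyMeasurable measurableSet_Icc⟩ (hg t ht)
  exact (hg.mono (uIcc_subset_Icc ⟨le_rfl, ht.1.trans ht.2⟩ ht)).intervalIntegrable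

theorem exists_continuousLinearMap_integral_apply [CompleteSpace F] {X : Type*}
    [TopologicalSpace X] [CompactSpace X] {φ : ℝ → X} (hφ : Continuous φ)
    {G : ℝ → E →L[ℝ] F} {a b : ℝ} (hG : ContinuousOn G (uIcc a b)) :
    ∃ L : C(X, E) →L[ℝ] F, ∀ w, L w = ∫ s in a..b, G s (w (φ s)) := by
  obtain ⟨C, hC⟩ := isCompact_uIcc.exists_bound_of_continuousOn hG
  have hint : ∀ w : C(X, E),
      IntervalIntegrable (fun s => G s (w (φ s))) MeasureTheory.volume a b :=
    fun w => (hG.clm_apply (w.continuous.comp hφ).continuousOn).intervalIntegrable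
  refine ⟨LinearMap.mkContinuous
    { toFun := fun w => ∫ s in a..b, G s (w (φ s))
      map_add' := fun w w' => by
        simp only [ContinuousMap.add_apply, map_add]
        exact intervalIntegral.integral_add (hint w) (hint w')
      map_smul' := fun c w => by
        simp only [ContinuousMap.smul_apply, map_smul, RingHom.id_apply]
        exact intervalIntegral.integral_smul c _ }
    (C * |b - a|) fun w => ?_, fun w => rfl⟩
  calc ‖∫ s in a..b, G s (w (φ s))‖ ≤ C * ‖w‖ * |b - a| :=
        intervalIntegral.norm_integral_le_of_norm_le_const fun s hs =>
          have hGs := hC s (uIoc_subset_uIcc hs)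
          (ContinuousLinearMap.le_opNorm _ _).trans
            (mul_le_mul hGs (w.norm_coe_le_norm _) (norm_nonneg _) ((norm_nonneg _).trans hGs))
    _ = C * |b - a| * ‖w‖ := by ring

theorem hasFDerivAt_of_forall_norm_sub_sub_le {g : E → F} {L : E →L[ℝ] F} {x : E}
    (h : ∀ ε > 0, ∃ δ > 0, ∀ y, ‖y‖ < δ → ‖g (x + y) - g x - L y‖ ≤ ε * ‖y‖) :
    HasFDerivAt g L x := by
  rw [hasFDerivAt_iff_isLittleO_nhds_zero, Asymptotics.isLittleO_iff]
  intro ε hε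
  obtain ⟨δ, hδ, hg⟩ := h ε hε
  filter_upwards [Metric.ball_mem_nhds 0 hδ] with y hy
  exact hg y (mem_ball_zero_iff.1 hy)

theorem gronwallBound_zero_eq_mul (K ε x : ℝ) :
    gronwallBound 0 K ε x = ε * gronwallBound 0 K 1 x := by
  unfold gronwallBound
  split_ifs <;> ring

end Calculus

section TransferOperator

open ContinuousLinearMap

variable {E : Type*} [NormedAddCommGroup E] [NormedSpace ℝ E]
  {A : ℝ → E →L[ℝ] E} {Φ : ℝ → ℝ → E →L[ℝ] E} {a b : ℝ} {K : ℝ≥0}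

def IsTransferOperator (A : ℝ → E →L[ℝ] E) (Φ : ℝ → ℝ → E →L[ℝ] E) (a b : ℝ) : Prop :=
  (∀ s ∈ Icc a b, Φ s s = 1) ∧
    ∀ s ∈ Icc a b, ∀ t ∈ Icc a b,
      HasDerivWithinAt (fun τ => Φ τ s) ((A t).comp (Φ t s)) (Icc a b) t

theorem eqOn_Icc_of_hasDerivWithinAt_comp {Y Z : ℝ → E →L[ℝ] E}
    (hA : ∀ t ∈ Icc a b, ‖A t‖ ≤ K)
    (hY : ∀ t ∈ Icc a b, HasDerivWithinAt Y ((A t).comp (Y t)) (Icc a b) t)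
    (hZ : ∀ t ∈ Icc a b, HasDerivWithinAt Z ((A t).comp (Z t)) (Icc a b) t)
    {r : ℝ} (hr : r ∈ Icc a b) (hYZ : Y r = Z r) : EqOn Y Z (Icc a b) := by
  have hlip : ∀ t ∈ Icc a b, LipschitzOnWith K (fun W : E →L[ℝ] E => (A t).comp W) univ :=
    fun t ht =>
      LipschitzWith.lipschitzOnWith <| LipschitzWith.of_dist_le_mul fun W W' => by
        rw [dist_eq_norm, dist_eq_norm, ← comp_sub]
        exact (opNorm_comp_le _ _).trans (by gcongr; exact hA t ht)
  have hYc : ContinuousOn Y (Icc a b) := fun t ht => (hY t ht).continuousWithinAt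
  have hZc : ContinuousOn Z (Icc a b) := fun t ht => (hZ t ht).continuousWithinAt
  intro t ht
  rcases le_total r t with hrt | htr
  · have hsub : Icc r b ⊆ Icc a b := Icc_subset_Icc_left hr.1
    refine ODE_solution_unique_of_mem_Icc_right (s := fun _ => univ)
      (fun τ hτ => hlip τ (hsub (Ico_subset_Icc_self hτ))) (hYc.mono hsub) ?_
      (fun _ _ => mem_univ _) (hZc.mono hsub) ?_ (fun _ _ => mem_univ _) hYZ ⟨hrt, ht.2⟩
      <;> intro τ hτ
    · exact (hY τ (hsub (Ico_subset_Icc_self hτ))).mono_of_mem_nhdsWithin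
        (Icc_mem_nhdsGE_of_mem ⟨hr.1.trans hτ.1, hτ.2⟩)
    · exact (hZ τ (hsub (Ico_subset_Icc_self hτ))).mono_of_mem_nhdsWithin
        (Icc_mem_nhdsGE_of_mem ⟨hr.1.trans hτ.1, hτ.2⟩)
  · have hsub : Icc a r ⊆ Icc a b := Icc_subset_Icc_right hr.2
    refine ODE_solution_unique_of_mem_Icc_left (s := fun _ => univ)
      (fun τ hτ => hlip τ (hsub (Ioc_subset_Icc_self hτ))) (hYc.mono hsub) ?_
      (fun _ _ => mem_univ _) (hZc.mono hsub) ?_ (fun _ _ => mem_univ _) hYZ ⟨ht.1, htr⟩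
      <;> intro τ hτ
    · exact (hY τ (hsub (Ioc_subset_Icc_self hτ))).mono_of_mem_nhdsWithin
        (Icc_mem_nhdsLE_of_mem ⟨hτ.1, hτ.2.trans hr.2⟩)
    · exact (hZ τ (hsub (Ioc_subset_Icc_self hτ))).mono_of_mem_nhdsWithin
        (Icc_mem_nhdsLE_of_mem ⟨hτ.1, hτ.2.trans hr.2⟩)

namespace IsTransferOperator

theorem comp_eq (hΦ : IsTransferOperator A Φ a b) (hA : ∀ t ∈ Icc a b, ‖A t‖ ≤ K)
    {r s t : ℝ} (hr : r ∈ Icc a b) (hs : s ∈ Icc a b) (ht : t ∈ Icc a b) :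
    (Φ t r).comp (Φ r s) = Φ t s := by
  refine eqOn_Icc_of_hasDerivWithinAt_comp (Y := fun τ => (Φ τ r).comp (Φ r s)) hA
    (fun τ hτ => ?_) (hΦ.2 s hs) hr
    (by simp [hΦ.1 r hr, one_def]) ht
  simpa only [comp_zero, add_zero, comp_assoc] using
    (hΦ.2 r hr τ hτ).clm_comp (hasDerivWithinAt_const τ _ (Φ r s))

theorem continuousOn_right [CompleteSpace E] (hΦ : IsTransferOperator A Φ a b)
    (hA : ∀ t ∈ Icc a b, ‖A t‖ ≤ K) {t : ℝ} (ht : t ∈ Icc a b) :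
    ContinuousOn (Φ t) (Icc a b) := by
  have ha : a ∈ Icc a b := ⟨le_rfl, ht.1.trans ht.2⟩
  let U : ∀ s ∈ Icc a b, (E →L[ℝ] E)ˣ := fun s hs =>
    ⟨Φ s a, Φ a s, (hΦ.comp_eq hA ha hs hs).trans (hΦ.1 s hs),
      (hΦ.comp_eq hA hs ha ha).trans (hΦ.1 a ha)⟩
  -- `Φ a s` is the inverse of `Φ s a`, and inversion is continuous on the units.
  have hinv : ContinuousOn (Φ a) (Icc a b) := fun s hs =>
    ((NormedRing.inverse_continuousAt (U s hs)).comp_continuousWithinAt (f := fun τ => Φ τ a)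
      (hΦ.2 a ha s hs).continuousWithinAt).congr
      (fun s' hs' => (Ring.inverse_unit (U s' hs')).symm) (Ring.inverse_unit (U s hs)).symm
  exact (continuousOn_const.clm_comp hinv).congr fun s hs => (hΦ.comp_eq hA ha hs ht).symm

theorem hasDerivWithinAt_integral [CompleteSpace E] (hΦ : IsTransferOperator A Φ a b)
    (hA : ∀ t ∈ Icc a b, ‖A t‖ ≤ K) {g : ℝ → E} (hg : ContinuousOn g (Icc a b)) {t : ℝ}
    (ht : t ∈ Icc a b) :
    HasDerivWithinAt (fun τ => ∫ s in a..τ, Φ τ s (g s))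
      (A t (∫ s in a..t, Φ t s (g s)) + g t) (Icc a b) t := by
  have ha : a ∈ Icc a b := ⟨le_rfl, ht.1.trans ht.2⟩
  have hg' : ContinuousOn (fun s => Φ a s (g s)) (Icc a b) :=
    (hΦ.continuousOn_right hA ha).clm_apply hg
  have hsplit : ∀ τ ∈ Icc a b,
      ∫ s in a..τ, Φ τ s (g s) = Φ τ a (∫ s in a..τ, Φ a s (g s)) := fun τ hτ => by
    have hsub : uIcc a τ ⊆ Icc a b := uIcc_subset_Icc ha hτ
    rw [← (Φ τ a).intervalIntegral_comp_comm ((hg'.mono hsub).intervalIntegrable)]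
    refine intervalIntegral.integral_congr fun s hs => ?_
    simp only [← hΦ.comp_eq hA ha (hsub hs) hτ, comp_apply]
  have hderiv := (hΦ.2 a ha t ht).clm_apply (hg'.hasDerivWithinAt_integral_Icc ht)
  rw [comp_apply, ← comp_apply (Φ t a), hΦ.comp_eq hA ha ht ht, hΦ.1 t ht, one_apply_eq_self,
    ← hsplit t ht] at hderiv
  exact hderiv.congr hsplit (hsplit t ht)

theorem norm_sub_integral_le [CompleteSpace E] (hΦ : IsTransferOperator A Φ a b)
    (hA : ∀ t ∈ Icc a b, ‖A t‖ ≤ K) {y g R : ℝ → E} {c : ℝ} (hg : ContinuousOn g (Icc a b))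
    (hy : ∀ t ∈ Icc a b, HasDerivWithinAt y (A t (y t) + g t + R t) (Icc a b) t)
    (hya : y a = 0) (hR : ∀ t ∈ Ico a b, ‖R t‖ ≤ c) {t : ℝ} (ht : t ∈ Icc a b) :
    ‖y t - ∫ s in a..t, Φ t s (g s)‖ ≤ c * gronwallBound 0 K 1 (b - a) := by
  set e := fun τ => y τ - ∫ s in a..τ, Φ τ s (g s)
  have he : ∀ τ ∈ Icc a b, HasDerivWithinAt e (A τ (e τ) + R τ) (Icc a b) τ := fun τ hτ =>
    ((hy τ hτ).sub (hΦ.hasDerivWithinAt_integral hA hg hτ)).congr_deriv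
      (by simp only [e, map_sub]; abel)
  have hgron : ‖e t‖ ≤ gronwallBound 0 K c (t - a) :=
    norm_le_gronwallBound_of_norm_deriv_right_le (fun τ hτ => (he τ hτ).continuousWithinAt)
      (fun τ hτ => (he τ (Ico_subset_Icc_self hτ)).mono_of_mem_nhdsWithin
        (Icc_mem_nhdsGE_of_mem hτ))
      (by simp [e, hya])
      (fun τ hτ => (norm_add_le _ _).trans (add_le_add
        ((le_opNorm _ _).trans (mul_le_mul_of_nonneg_right (hA τ (Ico_subset_Icc_self hτ))
          (norm_nonneg _))) (hR τ hτ))) t ht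
  rw [← gronwallBound_zero_eq_mul]
  rcases ht.2.eq_or_lt with rfl | htb
  · exact hgron
  · exact hgron.trans (gronwallBound_mono le_rfl ((norm_nonneg _).trans (hR t ⟨ht.1, htb⟩))
      K.2 (by linarith))

end IsTransferOperator

end TransferOperator

section BilinearField

variable {E V : Type*} [NormedAddCommGroup E] [NormedSpace ℝ E]
  [NormedAddCommGroup V] [NormedSpace ℝ V] {f : V → E} {M : E → V →L[ℝ] E} {Ω : Set E}

theorem ContDiffOn.continuousOn_fderiv_apply_comp {α : Type*} [TopologicalSpace α]
    (hΩ : IsOpen Ω) (hM : ContDiffOn ℝ 1 M Ω) {s : Set α} {x : α → E} {u : α → V}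
    (hx : ContinuousOn x s) (hxΩ : MapsTo x s Ω) (hu : ContinuousOn u s) :
    ContinuousOn (fun t => fderiv ℝ (fun y => M y (u t)) (x t)) s := by
  refine (((ContinuousLinearMap.flipₗᵢ ℝ E V E).continuous.comp_continuousOn
    ((hM.continuousOn_fderiv_of_isOpen hΩ le_rfl).comp hx hxΩ)).clm_apply hu).congr
    fun t ht => ?_
  have hMd := (hM.differentiableOn one_ne_zero).differentiableAt (hΩ.mem_nhds (hxΩ ht))
  simp [fderiv_clm_apply hMd (differentiableAt_const _)]

def bilinearField (f : V → E) (M : E → V →L[ℝ] E) (p : E × V) : E := f p.2 + M p.1 p.2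

theorem contDiffOn_bilinearField (hf : ContDiff ℝ 1 f) (hM : ContDiffOn ℝ 1 M Ω) :
    ContDiffOn ℝ 1 (bilinearField f M) (Ω ×ˢ univ) :=
  (hf.comp contDiff_snd).contDiffOn.add
    ((hM.comp contDiffOn_fst fun _ hp => hp.1).clm_apply contDiffOn_snd)

theorem fderiv_bilinearField_apply {p : E} {v : V} (hf : DifferentiableAt ℝ f v)
    (hM : DifferentiableAt ℝ M p) (h : E) (w : V) :
    fderiv ℝ (bilinearField f M) (p, v) (h, w) =
      fderiv ℝ (fun y => M y v) p h + (M p + fderiv ℝ f v) w := by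
  have hF : HasFDerivAt (bilinearField f M) _ (p, v) :=
    (hf.hasFDerivAt.comp (p, v) hasFDerivAt_snd).add
      ((hM.hasFDerivAt.comp (p, v) hasFDerivAt_fst).clm_apply hasFDerivAt_snd)
  simp only [hF.fderiv, fderiv_clm_apply hM (differentiableAt_const _), fderiv_fun_const,
    Pi.zero_apply, ContinuousLinearMap.comp_zero, zero_add, add_apply,
    ContinuousLinearMap.comp_apply, ContinuousLinearMap.coe_fst', ContinuousLinearMap.coe_snd',
    ContinuousLinearMap.flip_apply]
  abel

theorem exists_norm_bilinearField_sub_sub_fderiv_le [ProperSpace E] [ProperSpace V]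
    (hf : ContDiff ℝ 1 f) (hΩ : IsOpen Ω) (hM : ContDiffOn ℝ 1 M Ω) {K : Set E}
    (hK : IsCompact K) (hKΩ : K ⊆ Ω) {U : Set V} (hU : IsCompact U) (d : ℝ) {ε : ℝ}
    (hε : 0 < ε) :
    ∃ δ > 0, ∀ p ∈ K, ∀ v ∈ U, ∀ q w ρ, ‖q - p‖ ≤ d * ρ → ‖w‖ ≤ ρ → ρ < δ →
      ‖bilinearField f M (q, v + w) - bilinearField f M (p, v)
        - fderiv ℝ (bilinearField f M) (p, v) (q - p, w)‖ ≤ ε * ρ := by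
  have hD : 0 < max d 1 := lt_max_of_lt_right one_pos
  obtain ⟨δ, hδ, htaylor⟩ := (contDiffOn_bilinearField hf hM).exists_forall_norm_sub_sub_fderiv_le
    (hΩ.prod isOpen_univ) (hK.prod hU) (prod_mono hKΩ (subset_univ U)) (div_pos hε hD)
  refine ⟨δ / max d 1, div_pos hδ hD, fun p hp v hv q w ρ hq hw hρ => ?_⟩
  have hρ0 : 0 ≤ ρ := (norm_nonneg w).trans hw
  have hnorm : ‖(q - p, w)‖ ≤ max d 1 * ρ := by
    rw [Prod.norm_def, max_mul_of_nonneg _ _ hρ0, one_mul]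
    exact max_le_max hq hw
  have h := htaylor (p, v) ⟨hp, hv⟩ (q, v + w) (by
    rw [Prod.mk_sub_mk, add_sub_cancel_left]
    exact hnorm.trans_lt ((lt_div_iff₀' hD).1 hρ))
  rw [Prod.mk_sub_mk, add_sub_cancel_left] at h
  calc _ ≤ ε / max d 1 * ‖(q - p, w)‖ := h
    _ ≤ ε / max d 1 * (max d 1 * ρ) := by gcongr
    _ = ε * ρ := by field_simp

end BilinearField

section IsBilinearSolutionOn

variable {n m : ℕ} {f : (Fin m → ℝ) → (Fin n → ℝ)}
  {M : (Fin n → ℝ) → ((Fin m → ℝ) →L[ℝ] (Fin n → ℝ))} {Ω : Set (Fin n → ℝ)}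
  {u : ℝ → (Fin m → ℝ)} {x : ℝ → (Fin n → ℝ)} {I : Set ℝ}

namespace IsBilinearSolutionOn

theorem continuousOn (hx : IsBilinearSolutionOn f M Ω u x I) : ContinuousOn x I :=
  fun t ht => (hx t ht).2.continuousWithinAt

theorem mapsTo (hx : IsBilinearSolutionOn f M Ω u x I) : MapsTo x I Ω :=
  fun t ht => (hx t ht).1

theorem continuousOn_add_fderiv (hx : IsBilinearSolutionOn f M Ω u x I) (hf : ContDiff ℝ 1 f)
    (hM : ContinuousOn M Ω) (hu : ContinuousOn u I) :
    ContinuousOn (fun s => M (x s) + fderiv ℝ f (u s)) I :=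
  (hM.comp hx.continuousOn hx.mapsTo).add
    ((hf.continuous_fderiv one_ne_zero).comp_continuousOn hu)

theorem hasDerivWithinAt_sub {w : ℝ → (Fin m → ℝ)} {y : ℝ → (Fin n → ℝ)}
    (hy : IsBilinearSolutionOn f M Ω (fun t => u t + w t) y I)
    (hx : IsBilinearSolutionOn f M Ω u x I) (hf : Differentiable ℝ f) (hΩ : IsOpen Ω)
    (hM : DifferentiableOn ℝ M Ω) {t : ℝ} (ht : t ∈ I) :
    HasDerivWithinAt (fun τ => y τ - x τ)
      (fderiv ℝ (fun p => M p (u t)) (x t) (y t - x t) + (M (x t) + fderiv ℝ f (u t)) (w t)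
        + (bilinearField f M (y t, u t + w t) - bilinearField f M (x t, u t)
          - fderiv ℝ (bilinearField f M) (x t, u t) (y t - x t, w t))) I t := by
  refine ((hy t ht).2.sub (hx t ht).2).congr_deriv ?_
  rw [fderiv_bilinearField_apply hf.differentiableAt
    (hM.differentiableAt (hΩ.mem_nhds (hx t ht).1))]
  simp only [bilinearField]
  abel

theorem exists_norm_sub_sub_integral_le {Φ : ℝ → ℝ → (Fin n → ℝ) →L[ℝ] (Fin n → ℝ)} {T : ℝ}
    {K : ℝ≥0} (hx : IsBilinearSolutionOn f M Ω u x (Icc 0 T)) (hf : ContDiff ℝ 1 f)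
    (hΩ : IsOpen Ω) (hM : ContDiffOn ℝ 1 M Ω) (hu : ContinuousOn u (Icc 0 T))
    (hΦ : IsTransferOperator (fun t => fderiv ℝ (fun y => M y (u t)) (x t)) Φ 0 T)
    (hA : ∀ t ∈ Icc 0 T, ‖fderiv ℝ (fun y => M y (u t)) (x t)‖ ≤ K) (d : ℝ) {ε : ℝ}
    (hε : 0 < ε) :
    ∃ δ > 0, ∀ (w : ℝ → (Fin m → ℝ)) (y : ℝ → (Fin n → ℝ)) (ρ : ℝ), ContinuousOn w (Icc 0 T) →
      (∀ t ∈ Icc 0 T, ‖w t‖ ≤ ρ) → ρ < δ →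
      IsBilinearSolutionOn f M Ω (fun t => u t + w t) y (Icc 0 T) → y 0 = x 0 →
      (∀ t ∈ Icc 0 T, ‖y t - x t‖ ≤ d * ρ) → ∀ t ∈ Icc 0 T,
        ‖y t - x t - ∫ s in (0:ℝ)..t, Φ t s (M (x s) (w s) + fderiv ℝ f (u s) (w s))‖ ≤ ε * ρ := by
  obtain ⟨ε', hε', hε'ε⟩ := exists_pos_mul_lt hε (gronwallBound 0 K 1 (T - 0))
  obtain ⟨δ, hδ, hrem⟩ := exists_norm_bilinearField_sub_sub_fderiv_le hf hΩ hM
    (isCompact_Icc.image_of_continuousOn hx.continuousOn) (image_subset_iff.2 hx.mapsTo)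
    (isCompact_Icc.image_of_continuousOn hu) d hε'
  refine ⟨δ, hδ, fun w y ρ hw hwρ hρδ hy hy0 hyx t ht => ?_⟩
  calc _ ≤ ε' * ρ * gronwallBound 0 K 1 (T - 0) :=
        hΦ.norm_sub_integral_le (y := fun τ => y τ - x τ) hA
          ((hx.continuousOn_add_fderiv hf hM.continuousOn hu).clm_apply hw)
          (fun τ hτ => hy.hasDerivWithinAt_sub hx (hf.differentiable one_ne_zero) hΩ
            (hM.differentiableOn one_ne_zero) hτ)
          (by simp [hy0])
          (fun τ hτ => hrem _ (mem_image_of_mem x (Ico_subset_Icc_self hτ)) _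
            (mem_image_of_mem u (Ico_subset_Icc_self hτ)) _ _ _ (hyx τ (Ico_subset_Icc_self hτ))
            (hwρ τ (Ico_subset_Icc_self hτ)) hρδ) ht
    _ ≤ ε * ρ := by
        rw [mul_right_comm, mul_comm ε']
        exact mul_le_mul_of_nonneg_right hε'ε.le ((norm_nonneg _).trans (hwρ t ht))

end IsBilinearSolutionOn

end IsBilinearSolutionOn

theorem solution_fderiv_wrt_control_general
    {n m : ℕ} {T : ℝ} [hT : Fact (0 < T)]
    (f : (Fin m → ℝ) → (Fin n → ℝ)) (hf : ContDiff ℝ 1 f)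
    (M : (Fin n → ℝ) → ((Fin m → ℝ) →L[ℝ] (Fin n → ℝ)))
    (Ω : Set (Fin n → ℝ)) (hΩ : IsOpen Ω) (hM : ContDiffOn ℝ 1 M Ω)
    (u : C(AddCircle T, Fin m → ℝ))
    (x₀ : Fin n → ℝ)
    (x : ℝ → (Fin n → ℝ))
    (hx : IsBilinearSolutionOn f M Ω (fun t : ℝ => u t) x (Icc 0 T))
    (hx0 : x 0 = x₀)
    -- the transfer matrix `Φ(t;s)` along `(x,u)`
    (Φ : ℝ → ℝ → ((Fin n → ℝ) →L[ℝ] (Fin n → ℝ)))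
    (hΦinit : ∀ s ∈ Icc (0:ℝ) T, Φ s s = 1)
    (hΦode : ∀ s ∈ Icc (0:ℝ) T, ∀ t ∈ Icc (0:ℝ) T,
      HasDerivWithinAt (fun τ => Φ τ s)
        ((fderiv ℝ (fun y => M y (u t)) (x t)).comp (Φ t s)) (Icc 0 T) t)
    -- a family of perturbed solutions with the Lipschitz-in-control bound
    (r d : ℝ) (hr : 0 < r)
    (K : Set (Fin n → ℝ))
    (X : C(AddCircle T, Fin m → ℝ) → ℝ → (Fin n → ℝ))
    (hX0 : X 0 = x)
    (hX : ∀ Δu : C(AddCircle T, Fin m → ℝ), ‖Δu‖ < r →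
      IsBilinearSolutionOn f M Ω (fun t : ℝ => u t + Δu t) (X Δu) (Icc 0 T) ∧
      X Δu 0 = x₀ ∧
      ∀ t ∈ Icc (0:ℝ) T, X Δu t ∈ K ∧ ‖X Δu t - x t‖ ≤ d * ‖Δu‖) :
    (∀ ε > 0, ∃ δ > 0, ∀ Δu : C(AddCircle T, Fin m → ℝ), ‖Δu‖ < δ →
      ∀ t ∈ Icc (0:ℝ) T,
        ‖X Δu t - x t
          - ∫ s in (0:ℝ)..t, Φ t s (M (x s) (Δu s) + fderiv ℝ f (u s) (Δu s))‖
        ≤ ε * ‖Δu‖)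
    ∧ ∀ t ∈ Icc (0:ℝ) T,
        ∃ L : C(AddCircle T, Fin m → ℝ) →L[ℝ] (Fin n → ℝ),
          (∀ Δu : C(AddCircle T, Fin m → ℝ),
            L Δu = ∫ s in (0:ℝ)..t, Φ t s (M (x s) (Δu s) + fderiv ℝ f (u s) (Δu s)))
          ∧ HasFDerivAt (fun Δu => X Δu t) L 0 := by
  have hmk : Continuous ((↑) : ℝ → AddCircle T) := continuous_quotient_mk'
  have hu : ContinuousOn (fun t : ℝ => u t) (Icc 0 T) := (u.continuous.comp hmk).continuousOn
  obtain ⟨KA, hKA⟩ := isCompact_Icc.exists_bound_of_continuousOn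
    (hM.continuousOn_fderiv_apply_comp hΩ hx.continuousOn hx.mapsTo hu)
  have hA : ∀ t ∈ Icc (0:ℝ) T, ‖fderiv ℝ (fun y => M y (u t)) (x t)‖ ≤ KA.toNNReal :=
    fun t ht => (hKA t ht).trans (Real.le_coe_toNNReal KA)
  have hΦ : IsTransferOperator _ Φ 0 T := ⟨hΦinit, hΦode⟩
  have key : ∀ ε > 0, ∃ δ > 0, ∀ Δu : C(AddCircle T, Fin m → ℝ), ‖Δu‖ < δ →
      ∀ t ∈ Icc (0:ℝ) T,
        ‖X Δu t - x t
          - ∫ s in (0:ℝ)..t, Φ t s (M (x s) (Δu s) + fderiv ℝ f (u s) (Δu s))‖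
        ≤ ε * ‖Δu‖ := fun ε hε => by
    obtain ⟨δ, hδ, hlin⟩ := hx.exists_norm_sub_sub_integral_le hf hΩ hM hu hΦ hA d hε
    refine ⟨min r δ, lt_min hr hδ, fun Δu hΔu => ?_⟩
    obtain ⟨hy, hy0, hyx⟩ := hX Δu (hΔu.trans_le (min_le_left _ _))
    exact hlin _ _ _ (Δu.continuous.comp hmk).continuousOn (fun τ _ => Δu.norm_coe_le_norm _)
      (hΔu.trans_le (min_le_right _ _)) hy (hy0.trans hx0.symm) fun τ hτ => (hyx τ hτ).2
  refine ⟨key, fun t ht => ?_⟩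
  obtain ⟨L, hL⟩ := exists_continuousLinearMap_integral_apply hmk
    (G := fun s => (Φ t s).comp (M (x s) + fderiv ℝ f (u s)))
    (((hΦ.continuousOn_right hA ht).clm_comp
      (hx.continuousOn_add_fderiv hf hM.continuousOn hu)).mono
      (uIcc_subset_Icc ⟨le_rfl, hT.out.le⟩ ht))
  refine ⟨L, hL, hasFDerivAt_of_forall_norm_sub_sub_le fun ε hε => ?_⟩
  obtain ⟨δ, hδ, hεδ⟩ := key ε hε
  exact ⟨δ, hδ, fun Δu hΔu => by simpa [hX0, hL] using hεδ Δu hΔu t ht⟩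

/-- Proposition 5 of the paper.  The solution of the bilinear
control system is Fréchet differentiable with respect to the (`T`-periodic
continuous) control at `u`, uniformly in `t ∈ [0,T]`, and the derivative is
given by the variation-of-constants formula
`Δu ↦ ∫₀ᵗ Φ(t;s)(M(x(s)) + Df(u(s)))Δu(s) ds`. -/
theorem solution_fderiv_wrt_control
    {n m : ℕ} {T : ℝ} [hT : Fact (0 < T)]
    (f : (Fin m → ℝ) → (Fin n → ℝ)) (hf : ContDiff ℝ 1 f)
    (M : (Fin n → ℝ) → ((Fin m → ℝ) →L[ℝ] (Fin n → ℝ)))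
    (Ω : Set (Fin n → ℝ)) (hΩ : IsOpen Ω) (hM : ContDiffOn ℝ 1 M Ω)
    (u : C(AddCircle T, Fin m → ℝ))
    (x₀ : Fin n → ℝ) (hx₀ : x₀ ∈ Ω)
    (x : ℝ → (Fin n → ℝ))
    (hx : IsBilinearSolutionOn f M Ω (fun t : ℝ => u t) x (Icc 0 T))
    (hx0 : x 0 = x₀)
    -- the transfer matrix `Φ(t;s)` along `(x,u)`
    (Φ : ℝ → ℝ → ((Fin n → ℝ) →L[ℝ] (Fin n → ℝ)))
    (hΦinit : ∀ s ∈ Icc (0:ℝ) T, Φ s s = 1)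
    (hΦode : ∀ s ∈ Icc (0:ℝ) T, ∀ t ∈ Icc (0:ℝ) T,
      HasDerivWithinAt (fun τ => Φ τ s)
        ((fderiv ℝ (fun y => M y (u t)) (x t)).comp (Φ t s)) (Icc 0 T) t)
    -- a family of perturbed solutions with the Lipschitz-in-control bound
    (r d : ℝ) (hr : 0 < r) (hd : 0 < d)
    (K : Set (Fin n → ℝ)) (hK : IsCompact K) (hKΩ : K ⊆ Ω)
    (X : C(AddCircle T, Fin m → ℝ) → ℝ → (Fin n → ℝ))
    (hX0 : X 0 = x)
    (hX : ∀ Δu : C(AddCircle T, Fin m → ℝ), ‖Δu‖ < r →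
      IsBilinearSolutionOn f M Ω (fun t : ℝ => u t + Δu t) (X Δu) (Icc 0 T) ∧
      X Δu 0 = x₀ ∧
      ∀ t ∈ Icc (0:ℝ) T, X Δu t ∈ K ∧ ‖X Δu t - x t‖ ≤ d * ‖Δu‖) :
    (∀ ε > 0, ∃ δ > 0, ∀ Δu : C(AddCircle T, Fin m → ℝ), ‖Δu‖ < δ →
      ∀ t ∈ Icc (0:ℝ) T,
        ‖X Δu t - x t
          - ∫ s in (0:ℝ)..t, Φ t s (M (x s) (Δu s) + fderiv ℝ f (u s) (Δu s))‖
        ≤ ε * ‖Δu‖)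
    ∧ ∀ t ∈ Icc (0:ℝ) T,
        ∃ L : C(AddCircle T, Fin m → ℝ) →L[ℝ] (Fin n → ℝ),
          (∀ Δu : C(AddCircle T, Fin m → ℝ),
            L Δu = ∫ s in (0:ℝ)..t, Φ t s (M (x s) (Δu s) + fderiv ℝ f (u s) (Δu s)))
          ∧ HasFDerivAt (fun Δu => X Δu t) L 0 :=
  solution_fderiv_wrt_control_general (hT := hT) f hf M Ω hΩ hM u x₀ x hx hx0 Φ hΦinit hΦode r d hr
    K X hX0 hX
end

section
/- Let T > 0 and let D be a set of pairs (u, x₀) with u ∈ Z and x₀ ∈ Ω, equipped with a map assigning to each (u,x₀) ∈ D a solution x(·;u,x₀) : [0,T] → Ω of the bilinear control system with control u and x(0;u,x₀) = x₀. Assume: (i) there is a compact set K ⊆ Ω with x(t;u,x₀) ∈ K for all (u,x₀) ∈ D and t ∈ [0,T]; (ii) there is d > 0 with |x(t;u,x₀) − x(t;ũ,x̃₀)| ≤ d·( |x₀ − x̃₀| + ‖u − ũ‖_Z ) for all (u,x₀),(ũ,x̃₀) ∈ D and t ∈ [0,T]; (iii) there is d̂ > 0 with ‖Φ_{u,x₀}(t;s)‖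 ≤ d̂ for all (u,x₀) ∈ D and 0 ≤ s ≤ t ≤ T, where Φ_{u,x₀} is the transfer matrix along (x(·;u,x₀), u); and (iv) the components u of pairs in D take values in a fixed compact subset of ℝ^m. For (u,x₀) ∈ D and t ∈ [0,T], let B(t;u,x₀) ∈ B(Z,ℝ^n) be the bounded linear operator Δu ↦ ∫₀ᵗ Φ_{u,x₀}(t;s)·( M(x(s;u,x₀)) + Df(u(s)) )·Δu(s) ds. Then for every (u,x₀) ∈ D, sup_{t∈[0,T]} ‖B(t;ũ,x̃₀) − B(t;u,x₀)‖_{B(Z,ℝ^n)} → 0 as (ũ,x̃₀) → (u,x₀) within D (with respect to ‖·‖_Z on controls and the Euclidean norm on initial points). -/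
/-!
Write `Φ_q(t;s) ∘ (M(x_q(s)) + Df(u_q(s)))` for the kernel of `B(t;q)`. Since
`‖B(t;q) - B(t;p)‖ ≤ T · sup_{0 ≤ s ≤ t ≤ T} ‖kernel_q(t,s) - kernel_p(t,s)‖`, it suffices that
the kernels converge uniformly on the triangle as `q → p` in `D`. By (ii) the pair
(state, control) converges uniformly on `[0,T]` inside the compact set `K × K_c`, on which `J` and
`M + Df` are uniformly continuous, so the Jacobians and the factors `M(x) + Df(u)` converge
uniformly. The difference `Φ_q(·;s) - Φ_p(·;s)` vanishes at `s` and solves the transfer equation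
of `J_q` forced by `(J_q - J_p) Φ_p`, so Grönwall's inequality together with (iii) makes it
uniformly small. Continuity of `s ↦ Φ(t;s)`, needed for the integrals to make sense, also comes
from Grönwall: `Φ(·;s)` and `Φ(·;s')` solve the same equation and differ by `O(s' - s)` at `s'`.
-/

open Set

open Filter Topology

theorem exists_pos_lt_of_tendsto_zero {g : ℝ → ℝ} (hg : Tendsto g (𝓝 0) (𝓝 0)) {ε : ℝ}
    (hε : 0 < ε) : ∃ η > 0, g η < ε := by
  obtain ⟨η, hηε, hη⟩ := (((hg.eventually (gt_mem_nhds hε)).filter_mono nhdsWithin_le_nhds).and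
    (self_mem_nhdsWithin (s := Ioi 0))).exists
  exact ⟨η, hη, hηε⟩

theorem TendstoUniformlyOn.clm_comp {ι α E F G : Type*} [NormedAddCommGroup E] [NormedSpace ℝ E]
    [NormedAddCommGroup F] [NormedSpace ℝ F] [NormedAddCommGroup G] [NormedSpace ℝ G]
    {l : Filter ι} {S : Set α} {As : ι → α → F →L[ℝ] G} {A : α → F →L[ℝ] G}
    {Bs : ι → α → E →L[ℝ] F} {B : α → E →L[ℝ] F} {C₁ C₂ : ℝ}
    (hA : TendstoUniformlyOn As A l S) (hB : TendstoUniformlyOn Bs B l S)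
    (hAC : ∀ x ∈ S, ‖A x‖ ≤ C₁) (hBC : ∀ᶠ i in l, ∀ x ∈ S, ‖Bs i x‖ ≤ C₂) :
    TendstoUniformlyOn (fun i x => As i x ∘L Bs i x) (fun x => A x ∘L B x) l S := by
  rw [Metric.tendstoUniformlyOn_iff] at *
  intro ε hε
  obtain ⟨η, hη, hηε⟩ := exists_pos_lt_of_tendsto_zero (g := fun η => C₁ * η + η * C₂)
    ((by fun_prop : Continuous fun η : ℝ => C₁ * η + η * C₂).tendsto' 0 0 (by simp)) hε
  filter_upwards [hA η hη, hB η hη, hBC] with i hAi hBi hBCi x hx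
  have hsplit : A x ∘L B x - As i x ∘L Bs i x
      = A x ∘L (B x - Bs i x) + (A x - As i x) ∘L Bs i x := by
    rw [ContinuousLinearMap.comp_sub, ContinuousLinearMap.sub_comp]
    abel
  rw [dist_eq_norm, hsplit]
  calc _ ≤ ‖A x‖ * ‖B x - Bs i x‖ + ‖A x - As i x‖ * ‖Bs i x‖ :=
        (norm_add_le _ _).trans (add_le_add (ContinuousLinearMap.opNorm_comp_le _ _)
          (ContinuousLinearMap.opNorm_comp_le _ _))
    _ ≤ C₁ * η + η * C₂ := by
      rw [← dist_eq_norm, ← dist_eq_norm]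
      gcongr
      exacts [(norm_nonneg _).trans (hAC x hx), hAC x hx, (hBi x hx).le, (hAi x hx).le, hBCi x hx]
    _ < ε := hηε

theorem tendstoUniformlyOn_nhdsWithin_of_norm_sub_le {X E F : Type*} [TopologicalSpace X]
    [CompactSpace X] [NormedAddCommGroup E] [NormedAddCommGroup F] {D : Set (C(X, E) × F)}
    {p : C(X, E) × F} {x : C(X, E) → F → ℝ → F} {σ : ℝ → X} {S : Set ℝ} {d : ℝ}
    (hx : ∀ q ∈ D, ∀ s ∈ S, ‖x p.1 p.2 s - x q.1 q.2 s‖ ≤ d * (‖p.2 - q.2‖ + ‖p.1 - q.1‖)) :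
    TendstoUniformlyOn (fun q s => (x q.1 q.2 s, q.1 (σ s))) (fun s => (x p.1 p.2 s, p.1 (σ s)))
      (𝓝[D] p) S := by
  rw [Metric.tendstoUniformlyOn_iff]
  intro ε hε
  have hbound : Tendsto (fun q : C(X, E) × F => max (d * (‖p.2 - q.2‖ + ‖p.1 - q.1‖))
      ‖p.1 - q.1‖) (𝓝 p) (𝓝 0) :=
    Continuous.tendsto' (by fun_prop) p 0 (by simp)
  filter_upwards [self_mem_nhdsWithin, nhdsWithin_le_nhds (hbound.eventually (gt_mem_nhds hε))]
    with q hq hqε s hs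
  have hu := (p.1 - q.1).norm_coe_le_norm (σ s)
  rw [ContinuousMap.sub_apply] at hu
  rw [Prod.dist_eq, max_lt_iff, dist_eq_norm, dist_eq_norm]
  rw [max_lt_iff] at hqε
  exact ⟨(hx q hq s hs).trans_lt hqε.1, hu.trans_lt hqε.2⟩

theorem ContDiffOn.continuousOn_fderiv_clm_apply {E F G : Type*} [NormedAddCommGroup E]
    [NormedSpace ℝ E] [NormedAddCommGroup F] [NormedSpace ℝ F] [NormedAddCommGroup G]
    [NormedSpace ℝ G] {M : E → F →L[ℝ] G} {Ω : Set E} (hM : ContDiffOn ℝ 1 M Ω) (hΩ : IsOpen Ω) :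
    ContinuousOn (fun w : E × F => fderiv ℝ (fun y => M y w.2) w.1) (Ω ×ˢ univ) := by
  have hflip : ContinuousOn (fun w : E × F => (fderiv ℝ M w.1).flip w.2) (Ω ×ˢ univ) :=
    ((ContinuousLinearMap.flipₗᵢ ℝ E F G).continuous.comp_continuousOn
      ((hM.continuousOn_fderiv_of_isOpen hΩ le_rfl).comp continuousOn_fst
        fun w hw => hw.1)).clm_apply continuousOn_snd
  refine hflip.congr fun w hw => ?_
  have hMw : DifferentiableAt ℝ M w.1 :=
    (hM.differentiableOn one_ne_zero).differentiableAt (hΩ.mem_nhds hw.1)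
  simpa using fderiv_clm_apply hMw (differentiableAt_const w.2)

section TransferOperator

variable {E : Type*} [NormedAddCommGroup E] [NormedSpace ℝ E]

theorem norm_sub_le_gronwallBound_of_hasDerivWithinAt_comp {F₁ F₂ J₁ J₂ : ℝ → E →L[ℝ] E}
    {a b L η δ : ℝ}
    (hF₁ : ∀ t ∈ Icc a b, HasDerivWithinAt F₁ (J₁ t ∘L F₁ t) (Icc a b) t)
    (hF₂ : ∀ t ∈ Icc a b, HasDerivWithinAt F₂ (J₂ t ∘L F₂ t) (Icc a b) t)
    (hJ₁ : ∀ t ∈ Icc a b, ‖J₁ t‖ ≤ L) (hJ : ∀ t ∈ Icc a b, ‖(J₁ t - J₂ t) ∘L F₂ t‖ ≤ η)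
    (ha : ‖F₁ a - F₂ a‖ ≤ δ) :
    ∀ t ∈ Icc a b, ‖F₁ t - F₂ t‖ ≤ gronwallBound δ L η (t - a) := by
  have hF : ∀ t ∈ Icc a b, HasDerivWithinAt (fun τ => F₁ τ - F₂ τ)
      (J₁ t ∘L (F₁ t - F₂ t) + (J₁ t - J₂ t) ∘L F₂ t) (Icc a b) t := fun t ht =>
    ((hF₁ t ht).sub (hF₂ t ht)).congr_deriv <| by
      rw [ContinuousLinearMap.comp_sub, ContinuousLinearMap.sub_comp]
      abel
  refine norm_le_gronwallBound_of_norm_deriv_right_le (fun t ht => (hF t ht).continuousWithinAt)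
    (fun t ht => (hF t (Ico_subset_Icc_self ht)).mono_of_mem_nhdsWithin
      (Icc_mem_nhdsGE_of_mem ht)) ha fun t ht => ?_
  have ht' := Ico_subset_Icc_self ht
  calc _ ≤ ‖J₁ t ∘L (F₁ t - F₂ t)‖ + ‖(J₁ t - J₂ t) ∘L F₂ t‖ := norm_add_le _ _
    _ ≤ L * ‖F₁ t - F₂ t‖ + η := by
      gcongr
      · exact (ContinuousLinearMap.opNorm_comp_le _ _).trans
          (mul_le_mul_of_nonneg_right (hJ₁ t ht') (norm_nonneg _))
      · exact hJ t ht'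

def IsTransferOperatorOn (J : ℝ → E →L[ℝ] E) (Φ : ℝ → ℝ → E →L[ℝ] E) (T : ℝ) : Prop :=
  ∀ s ∈ Icc 0 T, Φ s s = 1 ∧
    ∀ t ∈ Icc 0 T, HasDerivWithinAt (fun τ => Φ τ s) (J t ∘L Φ t s) (Icc 0 T) t

def timeTriangle (T : ℝ) : Set (ℝ × ℝ) := {ts | 0 ≤ ts.2 ∧ ts.2 ≤ ts.1 ∧ ts.1 ≤ T}

namespace IsTransferOperatorOn

variable {J : ℝ → E →L[ℝ] E} {Φ : ℝ → ℝ → E →L[ℝ] E} {T L C : ℝ}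

theorem hasDerivWithinAt_Icc (hΦ : IsTransferOperatorOn J Φ T) {s a b : ℝ} (hs : s ∈ Icc 0 T)
    (ha : 0 ≤ a) (hb : b ≤ T) :
    ∀ t ∈ Icc a b, HasDerivWithinAt (fun τ => Φ τ s) (J t ∘L Φ t s) (Icc a b) t :=
  fun t ht => ((hΦ s hs).2 t ⟨ha.trans ht.1, ht.2.trans hb⟩).mono (Icc_subset_Icc ha hb)

theorem norm_sub_le (hΦ : IsTransferOperatorOn J Φ T) (hJ : ∀ t ∈ Icc 0 T, ‖J t‖ ≤ L)
    (hΦC : ∀ s t : ℝ, 0 ≤ s → s ≤ t → t ≤ T → ‖Φ t s‖ ≤ C) {s s' t : ℝ} (hs : 0 ≤ s)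
    (hss' : s ≤ s') (hs't : s' ≤ t) (ht : t ≤ T) :
    ‖Φ t s - Φ t s'‖ ≤ L * C * (s' - s) * Real.exp (L * T) := by
  have hsT : s ∈ Icc 0 T := ⟨hs, hss'.trans (hs't.trans ht)⟩
  have hs'T : s' ∈ Icc 0 T := ⟨hs.trans hss', hs't.trans ht⟩
  have hL : 0 ≤ L := (norm_nonneg _).trans (hJ s hsT)
  have hΦs' : ‖Φ s' s - Φ s' s'‖ ≤ L * C * (s' - s) := by
    rw [(hΦ s' hs'T).1, ← (hΦ s hsT).1]
    refine norm_image_sub_le_of_norm_deriv_le_segment' (hΦ.hasDerivWithinAt_Icc hsT hs hs'T.2)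
      (fun τ hτ => ?_) s' ⟨hss', le_rfl⟩
    exact (ContinuousLinearMap.opNorm_comp_le _ _).trans (mul_le_mul
      (hJ τ ⟨hs.trans hτ.1, hτ.2.le.trans hs'T.2⟩) (hΦC s τ hs hτ.1 (hτ.2.le.trans hs'T.2))
      (norm_nonneg _) hL)
  have hC : 0 ≤ C := (norm_nonneg _).trans (hΦC s s hs le_rfl hsT.2)
  calc ‖Φ t s - Φ t s'‖
      ≤ gronwallBound (L * C * (s' - s)) L 0 (t - s') :=
        norm_sub_le_gronwallBound_of_hasDerivWithinAt_comp
          (hΦ.hasDerivWithinAt_Icc hsT hs'T.1 ht) (hΦ.hasDerivWithinAt_Icc hs'T hs'T.1 ht)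
          (fun τ hτ => hJ τ ⟨hs'T.1.trans hτ.1, hτ.2.trans ht⟩) (by simp) hΦs' t ⟨hs't, le_rfl⟩
    _ ≤ L * C * (s' - s) * Real.exp (L * T) := by
      rw [gronwallBound_ε0]
      gcongr
      linarith [hs'T.1]

theorem continuousOn (hΦ : IsTransferOperatorOn J Φ T) (hJ : ∀ t ∈ Icc 0 T, ‖J t‖ ≤ L)
    (hΦC : ∀ s t : ℝ, 0 ≤ s → s ≤ t → t ≤ T → ‖Φ t s‖ ≤ C) {t : ℝ} (ht : t ≤ T) :
    ContinuousOn (Φ t) (Icc 0 t) := by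
  refine (LipschitzOnWith.of_dist_le' (K := L * C * Real.exp (L * T)) fun s hs s' hs' => ?_)
    |>.continuousOn
  rw [dist_eq_norm, Real.dist_eq]
  rcases le_total s s' with h | h
  · rw [abs_of_nonpos (sub_nonpos.2 h)]
    linarith [hΦ.norm_sub_le hJ hΦC hs.1 h hs'.2 ht]
  · rw [abs_of_nonneg (sub_nonneg.2 h), norm_sub_rev]
    linarith [hΦ.norm_sub_le hJ hΦC hs'.1 h hs.2 ht]

theorem tendstoUniformlyOn_timeTriangle {ι : Type*} {l : Filter ι} {Js : ι → ℝ → E →L[ℝ] E}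
    {Φs : ι → ℝ → ℝ → E →L[ℝ] E} (hΦ : IsTransferOperatorOn J Φ T)
    (hΦs : ∀ᶠ i in l, IsTransferOperatorOn (Js i) (Φs i) T) (hL : 0 ≤ L)
    (hJsL : ∀ᶠ i in l, ∀ t ∈ Icc 0 T, ‖Js i t‖ ≤ L)
    (hC : 0 ≤ C) (hΦC : ∀ s t : ℝ, 0 ≤ s → s ≤ t → t ≤ T → ‖Φ t s‖ ≤ C)
    (hJs : TendstoUniformlyOn Js J l (Icc 0 T)) :
    TendstoUniformlyOn (fun i ts => Φs i ts.1 ts.2) (fun ts => Φ ts.1 ts.2) l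
      (timeTriangle T) := by
  rw [Metric.tendstoUniformlyOn_iff] at hJs ⊢
  intro ε hε
  have hbound : Tendsto (fun η => gronwallBound 0 L (η * C) T) (𝓝 0) (𝓝 0) :=
    ((gronwallBound_continuous_ε 0 L T).comp (continuous_mul_const C)).tendsto' 0 0
      (by simp [gronwallBound_ε0_δ0])
  obtain ⟨η, hη, hηε⟩ := exists_pos_lt_of_tendsto_zero hbound hε
  filter_upwards [hΦs, hJsL, hJs η hη] with i hΦi hJLi hJi
  rintro ⟨t, s⟩ ⟨hs, hst, ht⟩
  have hsT : s ∈ Icc 0 T := ⟨hs, hst.trans ht⟩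
  have hforcing : ∀ τ ∈ Icc s T, ‖(Js i τ - J τ) ∘L Φ τ s‖ ≤ η * C := fun τ hτ => by
    refine (ContinuousLinearMap.opNorm_comp_le _ _).trans (mul_le_mul ?_
      (hΦC s τ hs hτ.1 hτ.2) (norm_nonneg _) hη.le)
    rw [← norm_neg, neg_sub, ← dist_eq_norm]
    exact (hJi τ ⟨hs.trans hτ.1, hτ.2⟩).le
  rw [dist_comm, dist_eq_norm]
  calc ‖Φs i t s - Φ t s‖
      ≤ gronwallBound 0 L (η * C) (t - s) :=
        norm_sub_le_gronwallBound_of_hasDerivWithinAt_comp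
          (hΦi.hasDerivWithinAt_Icc hsT hs le_rfl) (hΦ.hasDerivWithinAt_Icc hsT hs le_rfl)
          (fun τ hτ => hJLi τ ⟨hs.trans hτ.1, hτ.2⟩) hforcing
          (by simp [(hΦi s hsT).1, (hΦ s hsT).1]) t ⟨hst, ht⟩
    _ ≤ gronwallBound 0 L (η * C) T :=
        gronwallBound_mono le_rfl (mul_nonneg hη.le hC) hL (by linarith)
    _ < ε := hηε

theorem tendstoUniformlyOn_clm_comp {Z F : Type*} [UniformSpace Z] [NormedAddCommGroup F]
    [NormedSpace ℝ F] {S : Set Z} {Ψ : Z → E →L[ℝ] E} {Γ : Z → F →L[ℝ] E} {ι : Type*}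
    {l : Filter ι} {zs : ι → ℝ → Z} {z : ℝ → Z} {Φs : ι → ℝ → ℝ → E →L[ℝ] E}
    (hΦ : IsTransferOperatorOn (fun s => Ψ (z s)) Φ T)
    (hΦs : ∀ᶠ i in l, IsTransferOperatorOn (fun s => Ψ (zs i s)) (Φs i) T)
    (hS : IsCompact S) (hΨ : ContinuousOn Ψ S) (hΓ : ContinuousOn Γ S)
    (hzs : TendstoUniformlyOn zs z l (Icc 0 T)) (hzsS : ∀ᶠ i in l, ∀ s ∈ Icc 0 T, zs i s ∈ S)
    (hzS : ∀ s ∈ Icc 0 T, z s ∈ S) (hC : 0 ≤ C)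
    (hΦC : ∀ s t : ℝ, 0 ≤ s → s ≤ t → t ≤ T → ‖Φ t s‖ ≤ C) :
    TendstoUniformlyOn (fun i ts => Φs i ts.1 ts.2 ∘L Γ (zs i ts.2))
      (fun ts => Φ ts.1 ts.2 ∘L Γ (z ts.2)) l (timeTriangle T) := by
  obtain ⟨L, hL, hΨL⟩ := (hS.image_of_continuousOn hΨ).isBounded.exists_pos_norm_le
  obtain ⟨CΓ, -, hΓC⟩ := (hS.image_of_continuousOn hΓ).isBounded.exists_pos_norm_le
  have hsnd : timeTriangle T ⊆ Prod.snd ⁻¹' Icc 0 T := fun ts h => ⟨h.1, h.2.1.trans h.2.2⟩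
  have hΦconv := hΦ.tendstoUniformlyOn_timeTriangle hΦs hL.le
    (hzsS.mono fun i h s hs => hΨL _ (mem_image_of_mem _ (h s hs))) hC hΦC
    ((hS.uniformContinuousOn_of_continuous hΨ).comp_tendstoUniformlyOn_eventually hzsS hzS hzs)
  have hΓconv := (((hS.uniformContinuousOn_of_continuous hΓ).comp_tendstoUniformlyOn_eventually
    hzsS hzS hzs).comp Prod.snd).mono hsnd
  exact hΦconv.clm_comp hΓconv (fun ts h => hΦC _ _ h.1 h.2.1 h.2.2)
    (hzsS.mono fun i h ts hts => hΓC _ (mem_image_of_mem _ (h _ (hsnd hts))))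

end IsTransferOperatorOn

end TransferOperator

theorem norm_sub_le_mul_of_eq_intervalIntegral {X E F : Type*} [TopologicalSpace X]
    [CompactSpace X] [NormedAddCommGroup E] [NormedSpace ℝ E] [NormedAddCommGroup F]
    [NormedSpace ℝ F] {σ : ℝ → X} (hσ : Continuous σ) {B₁ B₂ : C(X, E) →L[ℝ] F}
    {K₁ K₂ : ℝ → E →L[ℝ] F} {t c : ℝ} (ht : 0 ≤ t)
    (hK₁ : ContinuousOn K₁ (Icc 0 t)) (hK₂ : ContinuousOn K₂ (Icc 0 t))
    (hB₁ : ∀ v, B₁ v = ∫ s in 0..t, K₁ s (v (σ s)))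
    (hB₂ : ∀ v, B₂ v = ∫ s in 0..t, K₂ s (v (σ s)))
    (hK : ∀ s ∈ Icc 0 t, ‖K₁ s - K₂ s‖ ≤ c) :
    ‖B₁ - B₂‖ ≤ c * t := by
  have hc : 0 ≤ c := (norm_nonneg _).trans (hK 0 ⟨le_rfl, ht⟩)
  refine ContinuousLinearMap.opNorm_le_bound _ (by positivity) fun v => ?_
  have hint : ∀ K : ℝ → E →L[ℝ] F, ContinuousOn K (Icc 0 t) →
      IntervalIntegrable (fun s => K s (v (σ s))) MeasureTheory.volume 0 t := fun K hK =>
    (hK.clm_apply (v.continuous.comp hσ).continuousOn).intervalIntegrable_of_Icc ht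
  rw [sub_apply, hB₁, hB₂,
    ← intervalIntegral.integral_sub (hint K₁ hK₁) (hint K₂ hK₂)]
  calc _ ≤ c * ‖v‖ * |t - 0| := intervalIntegral.norm_integral_le_of_norm_le_const fun s hs => ?_
    _ = c * t * ‖v‖ := by rw [sub_zero, abs_of_nonneg ht]; ring
  rw [uIoc_of_le ht] at hs
  rw [← sub_apply]
  exact (ContinuousLinearMap.le_opNorm _ _).trans (mul_le_mul (hK s (Ioc_subset_Icc_self hs))
    (v.norm_coe_le_norm _) (norm_nonneg _) hc)

theorem tendstoUniformlyOn_of_eq_intervalIntegral {ι X F G : Type*} [TopologicalSpace X]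
    [CompactSpace X] [NormedAddCommGroup F] [NormedSpace ℝ F] [NormedAddCommGroup G]
    [NormedSpace ℝ G] {l : Filter ι} {σ : ℝ → X} (hσ : Continuous σ) {T : ℝ} (hT : 0 ≤ T)
    {Bs : ι → ℝ → C(X, F) →L[ℝ] G} {B : ℝ → C(X, F) →L[ℝ] G}
    {Ks : ι → ℝ → ℝ → F →L[ℝ] G} {K : ℝ → ℝ → F →L[ℝ] G}
    (hKs : TendstoUniformlyOn (fun i ts => Ks i ts.1 ts.2) (fun ts => K ts.1 ts.2) l
      (timeTriangle T))
    (hKs_cont : ∀ᶠ i in l, ∀ t ∈ Icc 0 T, ContinuousOn (Ks i t) (Icc 0 t))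
    (hK_cont : ∀ t ∈ Icc 0 T, ContinuousOn (K t) (Icc 0 t))
    (hBs : ∀ᶠ i in l, ∀ t ∈ Icc 0 T, ∀ v, Bs i t v = ∫ s in 0..t, Ks i t s (v (σ s)))
    (hB : ∀ t ∈ Icc 0 T, ∀ v, B t v = ∫ s in 0..t, K t s (v (σ s))) :
    TendstoUniformlyOn Bs B l (Icc 0 T) := by
  rw [Metric.tendstoUniformlyOn_iff] at hKs ⊢
  intro ε hε
  filter_upwards [hKs (ε / (T + 1)) (by positivity), hKs_cont, hBs] with i hKi hcont hBi t ht
  rw [dist_comm, dist_eq_norm]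
  calc ‖Bs i t - B t‖ ≤ ε / (T + 1) * t :=
        norm_sub_le_mul_of_eq_intervalIntegral hσ ht.1 (hcont t ht) (hK_cont t ht) (hBi t ht)
          (hB t ht) fun s hs => by
            rw [← dist_eq_norm, dist_comm]
            exact (hKi (t, s) ⟨hs.1, hs.2, ht.2⟩).le
    _ < ε := by
      rw [div_mul_eq_mul_div, div_lt_iff₀ (by positivity)]
      nlinarith [ht.2]

theorem control_sensitivity_operator_continuous_general
    {n m : ℕ} {T : ℝ} [hT : Fact (0 < T)]
    (f : (Fin m → ℝ) → (Fin n → ℝ)) (hf : ContDiff ℝ 1 f)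
    (M : (Fin n → ℝ) → ((Fin m → ℝ) →L[ℝ] (Fin n → ℝ)))
    (Ω : Set (Fin n → ℝ)) (hΩ : IsOpen Ω) (hM : ContDiffOn ℝ 1 M Ω)
    (D : Set (C(AddCircle T, Fin m → ℝ) × (Fin n → ℝ)))
    -- the family of solutions indexed by the data `(u, x₀) ∈ D`
    (x : C(AddCircle T, Fin m → ℝ) → (Fin n → ℝ) → ℝ → (Fin n → ℝ))
    (hsol : ∀ p ∈ D,
      IsBilinearSolutionOn f M Ω (fun t : ℝ => p.1 t) (x p.1 p.2) (Icc 0 T) ∧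
      x p.1 p.2 0 = p.2)
    -- (i) uniform compactness of the trajectories
    (K : Set (Fin n → ℝ)) (hK : IsCompact K) (hKΩ : K ⊆ Ω)
    (hxK : ∀ p ∈ D, ∀ t ∈ Icc (0:ℝ) T, x p.1 p.2 t ∈ K)
    -- (ii) Lipschitz dependence on the data
    (d : ℝ)
    (hLip : ∀ p ∈ D, ∀ q ∈ D, ∀ t ∈ Icc (0:ℝ) T,
      ‖x p.1 p.2 t - x q.1 q.2 t‖ ≤ d * (‖p.2 - q.2‖ + ‖p.1 - q.1‖))
    -- (iii) transfer matrices with a uniform bound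
    (Φ : C(AddCircle T, Fin m → ℝ) → (Fin n → ℝ) → ℝ → ℝ →
      ((Fin n → ℝ) →L[ℝ] (Fin n → ℝ)))
    (hΦinit : ∀ p ∈ D, ∀ s ∈ Icc (0:ℝ) T, Φ p.1 p.2 s s = 1)
    (hΦode : ∀ p ∈ D, ∀ s ∈ Icc (0:ℝ) T, ∀ t ∈ Icc (0:ℝ) T,
      HasDerivWithinAt (fun τ => Φ p.1 p.2 τ s)
        ((fderiv ℝ (fun y => M y (p.1 t)) (x p.1 p.2 t)).comp (Φ p.1 p.2 t s))
        (Icc 0 T) t)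
    (dhat : ℝ) (hdhat : 0 < dhat)
    (hΦbound : ∀ p ∈ D, ∀ s t : ℝ, 0 ≤ s → s ≤ t → t ≤ T →
      ‖Φ p.1 p.2 t s‖ ≤ dhat)
    -- (iv) controls take values in a fixed compact set
    (Kc : Set (Fin m → ℝ)) (hKc : IsCompact Kc)
    (huKc : ∀ p ∈ D, ∀ t : ℝ, p.1 t ∈ Kc)
    -- the control-sensitivity operators, characterized by their action
    (B : C(AddCircle T, Fin m → ℝ) → (Fin n → ℝ) → ℝ →
      (C(AddCircle T, Fin m → ℝ) →L[ℝ] (Fin n → ℝ)))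
    (hB : ∀ p ∈ D, ∀ t ∈ Icc (0:ℝ) T, ∀ Δu : C(AddCircle T, Fin m → ℝ),
      B p.1 p.2 t Δu
        = ∫ s in (0:ℝ)..t,
            Φ p.1 p.2 t s (M (x p.1 p.2 s) (Δu s) + fderiv ℝ f (p.1 s) (Δu s))) :
    ∀ p ∈ D, ∀ ε > 0, ∃ δ > 0, ∀ q ∈ D,
      ‖q.1 - p.1‖ < δ → ‖q.2 - p.2‖ < δ →
      ∀ t ∈ Icc (0:ℝ) T, ‖B q.1 q.2 t - B p.1 p.2 t‖ ≤ ε := by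
  intro p hp ε hε
  let z : C(AddCircle T, Fin m → ℝ) × (Fin n → ℝ) → ℝ → (Fin n → ℝ) × (Fin m → ℝ) :=
    fun q s => (x q.1 q.2 s, q.1 s)
  let J : (Fin n → ℝ) × (Fin m → ℝ) → (Fin n → ℝ) →L[ℝ] (Fin n → ℝ) :=
    fun w => fderiv ℝ (fun y => M y w.2) w.1
  let Γ : (Fin n → ℝ) × (Fin m → ℝ) → (Fin m → ℝ) →L[ℝ] (Fin n → ℝ) :=
    fun w => M w.1 + fderiv ℝ f w.2
  have hzK : ∀ r ∈ D, ∀ s ∈ Icc 0 T, z r s ∈ K ×ˢ Kc :=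
    fun r hr s hs => ⟨hxK r hr s hs, huKc r hr s⟩
  have hzc : ∀ r ∈ D, ContinuousOn (z r) (Icc 0 T) := fun r hr =>
    ContinuousOn.prodMk (fun s hs => ((hsol r hr).1 s hs).2.continuousWithinAt)
      (r.1.continuous.comp (AddCircle.continuous_mk' T)).continuousOn
  have hJ : ContinuousOn J (K ×ˢ Kc) :=
    (hM.continuousOn_fderiv_clm_apply hΩ).mono (prod_mono hKΩ (subset_univ _))
  have hΓ : ContinuousOn Γ (K ×ˢ Kc) :=
    (hM.continuousOn.comp continuousOn_fst fun w hw => hKΩ hw.1).add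
      ((hf.continuous_fderiv one_ne_zero).comp_continuousOn continuousOn_snd)
  have hΦ : ∀ r ∈ D, IsTransferOperatorOn (fun s => J (z r s)) (Φ r.1 r.2) T :=
    fun r hr s hs => ⟨hΦinit r hr s hs, hΦode r hr s hs⟩
  obtain ⟨L, hL⟩ := (hK.prod hKc).exists_bound_of_continuousOn hJ
  have hker_cont : ∀ r ∈ D, ∀ t ∈ Icc 0 T,
      ContinuousOn (fun s => Φ r.1 r.2 t s ∘L Γ (z r s)) (Icc 0 t) := fun r hr t ht =>
    ((hΦ r hr).continuousOn (fun s hs => hL _ (hzK r hr s hs)) (hΦbound r hr) ht.2).clm_comp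
      ((hΓ.comp (hzc r hr) (hzK r hr)).mono (Icc_subset_Icc le_rfl ht.2))
  have hB' : ∀ r ∈ D, ∀ t ∈ Icc 0 T, ∀ v : C(AddCircle T, Fin m → ℝ),
      B r.1 r.2 t v = ∫ s in (0:ℝ)..t, (Φ r.1 r.2 t s ∘L Γ (z r s)) (v s) := fun r hr t ht v => by
    simp [hB r hr t ht v, Γ, z]
  have hBconv := tendstoUniformlyOn_of_eq_intervalIntegral (l := 𝓝[D] p)
      (Bs := fun q => B q.1 q.2) (AddCircle.continuous_mk' T) hT.out.le
      ((hΦ p hp).tendstoUniformlyOn_clm_comp (eventually_nhdsWithin_of_forall hΦ) (hK.prod hKc)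
        hJ hΓ (tendstoUniformlyOn_nhdsWithin_of_norm_sub_le fun q hq => hLip p hp q hq)
        (eventually_nhdsWithin_of_forall hzK) (hzK p hp) hdhat.le (hΦbound p hp))
      (eventually_nhdsWithin_of_forall hker_cont) (hker_cont p hp)
      (eventually_nhdsWithin_of_forall hB') (hB' p hp)
  obtain ⟨δ, hδ, hδε⟩ := Metric.mem_nhdsWithin_iff.1 (Metric.tendstoUniformlyOn_iff.1 hBconv ε hε)
  refine ⟨δ, hδ, fun q hq hq₁ hq₂ t ht => ?_⟩
  have hqp : dist q p < δ := max_lt (by rwa [dist_eq_norm]) (by rwa [dist_eq_norm])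
  have hqt := (hδε ⟨hqp, hq⟩ t ht).le
  rwa [dist_comm, dist_eq_norm] at hqt

/-- Proposition 6 of the paper.  Under the uniform
compactness, Lipschitz-in-data, and transfer-matrix bounds (i)–(iv), the
control-sensitivity operator
`B(t;u,x₀) : Δu ↦ ∫₀ᵗ Φ_{u,x₀}(t;s)(M(x(s;u,x₀)) + Df(u(s)))Δu(s) ds`
is continuous in the data `(u,x₀) ∈ D`, uniformly in `t ∈ [0,T]`. -/
theorem control_sensitivity_operator_continuous
    {n m : ℕ} {T : ℝ} [hT : Fact (0 < T)]
    (f : (Fin m → ℝ) → (Fin n → ℝ)) (hf : ContDiff ℝ 1 f)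
    (M : (Fin n → ℝ) → ((Fin m → ℝ) →L[ℝ] (Fin n → ℝ)))
    (Ω : Set (Fin n → ℝ)) (hΩ : IsOpen Ω) (hM : ContDiffOn ℝ 1 M Ω)
    (D : Set (C(AddCircle T, Fin m → ℝ) × (Fin n → ℝ)))
    -- the family of solutions indexed by the data `(u, x₀) ∈ D`
    (x : C(AddCircle T, Fin m → ℝ) → (Fin n → ℝ) → ℝ → (Fin n → ℝ))
    (hsol : ∀ p ∈ D,
      IsBilinearSolutionOn f M Ω (fun t : ℝ => p.1 t) (x p.1 p.2) (Icc 0 T) ∧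
      x p.1 p.2 0 = p.2)
    -- (i) uniform compactness of the trajectories
    (K : Set (Fin n → ℝ)) (hK : IsCompact K) (hKΩ : K ⊆ Ω)
    (hxK : ∀ p ∈ D, ∀ t ∈ Icc (0:ℝ) T, x p.1 p.2 t ∈ K)
    -- (ii) Lipschitz dependence on the data
    (d : ℝ) (hd : 0 < d)
    (hLip : ∀ p ∈ D, ∀ q ∈ D, ∀ t ∈ Icc (0:ℝ) T,
      ‖x p.1 p.2 t - x q.1 q.2 t‖ ≤ d * (‖p.2 - q.2‖ + ‖p.1 - q.1‖))
    -- (iii) transfer matrices with a uniform bound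
    (Φ : C(AddCircle T, Fin m → ℝ) → (Fin n → ℝ) → ℝ → ℝ →
      ((Fin n → ℝ) →L[ℝ] (Fin n → ℝ)))
    (hΦinit : ∀ p ∈ D, ∀ s ∈ Icc (0:ℝ) T, Φ p.1 p.2 s s = 1)
    (hΦode : ∀ p ∈ D, ∀ s ∈ Icc (0:ℝ) T, ∀ t ∈ Icc (0:ℝ) T,
      HasDerivWithinAt (fun τ => Φ p.1 p.2 τ s)
        ((fderiv ℝ (fun y => M y (p.1 t)) (x p.1 p.2 t)).comp (Φ p.1 p.2 t s))
        (Icc 0 T) t)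
    (dhat : ℝ) (hdhat : 0 < dhat)
    (hΦbound : ∀ p ∈ D, ∀ s t : ℝ, 0 ≤ s → s ≤ t → t ≤ T →
      ‖Φ p.1 p.2 t s‖ ≤ dhat)
    -- (iv) controls take values in a fixed compact set
    (Kc : Set (Fin m → ℝ)) (hKc : IsCompact Kc)
    (huKc : ∀ p ∈ D, ∀ t : ℝ, p.1 t ∈ Kc)
    -- the control-sensitivity operators, characterized by their action
    (B : C(AddCircle T, Fin m → ℝ) → (Fin n → ℝ) → ℝ →
      (C(AddCircle T, Fin m → ℝ) →L[ℝ] (Fin n → ℝ)))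
    (hB : ∀ p ∈ D, ∀ t ∈ Icc (0:ℝ) T, ∀ Δu : C(AddCircle T, Fin m → ℝ),
      B p.1 p.2 t Δu
        = ∫ s in (0:ℝ)..t,
            Φ p.1 p.2 t s (M (x p.1 p.2 s) (Δu s) + fderiv ℝ f (p.1 s) (Δu s))) :
    ∀ p ∈ D, ∀ ε > 0, ∃ δ > 0, ∀ q ∈ D,
      ‖q.1 - p.1‖ < δ → ‖q.2 - p.2‖ < δ →
      ∀ t ∈ Icc (0:ℝ) T, ‖B q.1 q.2 t - B p.1 p.2 t‖ ≤ ε :=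
  control_sensitivity_operator_continuous_general (hT := hT) f hf M Ω hΩ hM D x hsol K hK hKΩ hxK d
    hLip Φ hΦinit hΦode dhat hdhat hΦbound Kc hKc huKc B hB
end

section
/- Under the hypotheses (i)–(iv) of the previous setting — a family of solutions x(·;u,x₀) : [0,T] → Ω of the bilinear control system for (u,x₀) ∈ D with values in a fixed compact K ⊆ Ω, the Lipschitz-in-data estimate |x(t;u,x₀) − x(t;ũ,x̃₀)| ≤ d·( |x₀ − x̃₀| + ‖u − ũ‖_Z ), the uniform transfer-matrix bound ‖Φ_{u,x₀}(t;s)‖ ≤ d̂, and controls with values in a fixed compact subset of ℝ^m — the map (u,x₀) ↦ Φ_{u,x₀}(t;0) is continuous on D uniformly in t: for every (u,x₀) ∈ D, sup_{t∈[0,T]} ‖Φ_{ũ,x̃₀}(t;0) − Φ_{u,x₀}(t;0)‖ → 0 as (ũ,x̃₀) → (u,x₀) within D. -/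
open Set

open Filter Topology

/-! Along `[0, T]`, `Δ = Φ_q(·;0) - Φ_p(·;0)` vanishes at `0` and solves
`Δ' = A_q Δ + (A_q - A_p) Φ_p`, where `A(y, v) = D_y (M y v)` is evaluated along the trajectory
and the control. This coefficient is continuous, hence bounded by some `L` and uniformly
continuous, on the compact set `K × Kc`; with the Lipschitz dependence of the trajectories on the
data, `‖A_q - A_p‖ ≤ η` on `[0, T]` once `q` is close to `p`. Grönwall's inequality then bounds
`‖Δ‖` by `gronwallBound 0 L (η d̂) T`, which tends to `0` with `η`. -/

theorem norm_sub_le_gronwallBound_of_hasDerivWithinAt_mul {R : Type*} [NormedRing R]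
    [NormedSpace ℝ R] {Φ Ψ A B : ℝ → R} {a b L η C : ℝ}
    (hΦ : ∀ t ∈ Icc a b, HasDerivWithinAt Φ (A t * Φ t) (Icc a b) t)
    (hΨ : ∀ t ∈ Icc a b, HasDerivWithinAt Ψ (B t * Ψ t) (Icc a b) t)
    (h₀ : Φ a = Ψ a) (hA : ∀ t ∈ Icc a b, ‖A t‖ ≤ L)
    (hAB : ∀ t ∈ Icc a b, ‖A t - B t‖ ≤ η) (hΨC : ∀ t ∈ Icc a b, ‖Ψ t‖ ≤ C) :
    ∀ t ∈ Icc a b, ‖Φ t - Ψ t‖ ≤ gronwallBound 0 L (η * C) (b - a) := by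
  have hderiv : ∀ s ∈ Icc a b,
      HasDerivWithinAt (fun τ => Φ τ - Ψ τ) (A s * (Φ s - Ψ s) + (A s - B s) * Ψ s)
        (Icc a b) s :=
    fun s hs => ((hΦ s hs).sub (hΨ s hs)).congr_deriv (by noncomm_ring)
  have hbound : ∀ s ∈ Icc a b,
      ‖A s * (Φ s - Ψ s) + (A s - B s) * Ψ s‖ ≤ L * ‖Φ s - Ψ s‖ + η * C := fun s hs =>
    calc ‖A s * (Φ s - Ψ s) + (A s - B s) * Ψ s‖
        ≤ ‖A s‖ * ‖Φ s - Ψ s‖ + ‖A s - B s‖ * ‖Ψ s‖ :=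
          (norm_add_le _ _).trans (add_le_add (norm_mul_le _ _) (norm_mul_le _ _))
      _ ≤ L * ‖Φ s - Ψ s‖ + η * C :=
          add_le_add (mul_le_mul_of_nonneg_right (hA s hs) (norm_nonneg _))
            (mul_le_mul (hAB s hs) (hΨC s hs) (norm_nonneg _) ((norm_nonneg _).trans (hAB s hs)))
  intro t ht
  calc ‖Φ t - Ψ t‖ ≤ gronwallBound 0 L (η * C) (t - a) :=
        norm_le_gronwallBound_of_norm_deriv_right_le
          (fun s hs => (hderiv s hs).continuousWithinAt)
          (fun s hs => (hderiv s (Ico_subset_Icc_self hs)).mono_of_mem_nhdsWithin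
            (Icc_mem_nhdsGE_of_mem hs))
          (by simp [h₀]) (fun s hs => hbound s (Ico_subset_Icc_self hs)) t ht
    _ ≤ gronwallBound 0 L (η * C) (b - a) :=
        gronwallBound_mono le_rfl
          (mul_nonneg ((norm_nonneg _).trans (hAB t ht)) ((norm_nonneg _).trans (hΨC t ht)))
          ((norm_nonneg _).trans (hA t ht)) (by linarith [ht.2])

theorem IsCompact.exists_pos_forall_dist_lt_of_continuousOn_prod {X U Y : Type*}
    [PseudoMetricSpace X] [PseudoMetricSpace U] [PseudoMetricSpace Y] {K : Set X} {Kc : Set U}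
    {G : X × U → Y} (hK : IsCompact K) (hKc : IsCompact Kc) (hG : ContinuousOn G (K ×ˢ Kc))
    {η : ℝ} (hη : 0 < η) :
    ∃ δ > 0, ∀ x₁ ∈ K, ∀ u₁ ∈ Kc, ∀ x₂ ∈ K, ∀ u₂ ∈ Kc,
      dist x₁ x₂ < δ → dist u₁ u₂ < δ → dist (G (x₁, u₁)) (G (x₂, u₂)) < η := by
  obtain ⟨δ, hδ, hGδ⟩ := Metric.uniformContinuousOn_iff.mp
    ((hK.prod hKc).uniformContinuousOn_of_continuous hG) η hη
  exact ⟨δ, hδ, fun x₁ hx₁ u₁ hu₁ x₂ hx₂ u₂ hu₂ hx hu =>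
    hGδ _ ⟨hx₁, hu₁⟩ _ ⟨hx₂, hu₂⟩ (by rw [Prod.dist_eq]; exact max_lt hx hu)⟩

theorem exists_pos_gronwallBound_mul_lt (K x C : ℝ) {ε : ℝ} (hε : 0 < ε) :
    ∃ η > 0, gronwallBound 0 K (η * C) x < ε := by
  have hcont : Continuous fun η => gronwallBound 0 K (η * C) x :=
    (gronwallBound_continuous_ε 0 K x).comp (continuous_id.mul continuous_const)
  have hlim : Tendsto (fun η => gronwallBound 0 K (η * C) x) (𝓝[>] 0) (𝓝 0) := by
    simpa [gronwallBound_ε0_δ0] using (hcont.tendsto 0).mono_left nhdsWithin_le_nhds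
  obtain ⟨η, hηε, hη⟩ := ((hlim.eventually (gt_mem_nhds hε)).and self_mem_nhdsWithin).exists
  exact ⟨η, hη, hηε⟩

theorem ContinuousOn.fderiv_clm_apply_const {E F G : Type*}
    [NormedAddCommGroup E] [NormedSpace ℝ E] [NormedAddCommGroup F] [NormedSpace ℝ F]
    [NormedAddCommGroup G] [NormedSpace ℝ G] {M : E → F →L[ℝ] G} {Ω : Set E}
    (hΩ : IsOpen Ω) (hM : ContDiffOn ℝ 1 M Ω) :
    ContinuousOn (fun z : E × F => fderiv ℝ (fun y => M y z.2) z.1) (Ω ×ˢ univ) := by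
  have hflip : ContinuousOn (fun z : E × F => (fderiv ℝ M z.1).flip z.2) (Ω ×ˢ univ) :=
    (((ContinuousLinearMap.flipₗᵢ ℝ E F G).continuous.comp_continuousOn
      (hM.continuousOn_fderiv_of_isOpen hΩ le_rfl)).comp continuousOn_fst
      fun z hz => hz.1).clm_apply continuousOn_snd
  refine hflip.congr fun z hz => ?_
  have hMz : DifferentiableAt ℝ M z.1 :=
    (hM.differentiableOn one_ne_zero).differentiableAt (hΩ.mem_nhds hz.1)
  simp [fderiv_clm_apply hMz (differentiableAt_const z.2)]

theorem state_sensitivity_matrix_continuous_general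
    {n m : ℕ} {T : ℝ} [hT : Fact (0 < T)]
    (M : (Fin n → ℝ) → ((Fin m → ℝ) →L[ℝ] (Fin n → ℝ)))
    (Ω : Set (Fin n → ℝ)) (hΩ : IsOpen Ω) (hM : ContDiffOn ℝ 1 M Ω)
    (D : Set (C(AddCircle T, Fin m → ℝ) × (Fin n → ℝ)))
    -- the family of solutions indexed by the data `(u, x₀) ∈ D`
    (x : C(AddCircle T, Fin m → ℝ) → (Fin n → ℝ) → ℝ → (Fin n → ℝ))
    -- (i) uniform compactness of the trajectories
    (K : Set (Fin n → ℝ)) (hK : IsCompact K) (hKΩ : K ⊆ Ω)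
    (hxK : ∀ p ∈ D, ∀ t ∈ Icc (0:ℝ) T, x p.1 p.2 t ∈ K)
    -- (ii) Lipschitz dependence on the data
    (d : ℝ) (hd : 0 < d)
    (hLip : ∀ p ∈ D, ∀ q ∈ D, ∀ t ∈ Icc (0:ℝ) T,
      ‖x p.1 p.2 t - x q.1 q.2 t‖ ≤ d * (‖p.2 - q.2‖ + ‖p.1 - q.1‖))
    -- (iii) transfer matrices with a uniform bound
    (Φ : C(AddCircle T, Fin m → ℝ) → (Fin n → ℝ) → ℝ → ℝ →
      ((Fin n → ℝ) →L[ℝ] (Fin n → ℝ)))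
    (hΦinit : ∀ p ∈ D, ∀ s ∈ Icc (0:ℝ) T, Φ p.1 p.2 s s = 1)
    (hΦode : ∀ p ∈ D, ∀ s ∈ Icc (0:ℝ) T, ∀ t ∈ Icc (0:ℝ) T,
      HasDerivWithinAt (fun τ => Φ p.1 p.2 τ s)
        ((fderiv ℝ (fun y => M y (p.1 t)) (x p.1 p.2 t)).comp (Φ p.1 p.2 t s))
        (Icc 0 T) t)
    (dhat : ℝ)
    (hΦbound : ∀ p ∈ D, ∀ s t : ℝ, 0 ≤ s → s ≤ t → t ≤ T →
      ‖Φ p.1 p.2 t s‖ ≤ dhat)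
    -- (iv) controls take values in a fixed compact set
    (Kc : Set (Fin m → ℝ)) (hKc : IsCompact Kc)
    (huKc : ∀ p ∈ D, ∀ t : ℝ, p.1 t ∈ Kc) :
    ∀ p ∈ D, ∀ ε > 0, ∃ δ > 0, ∀ q ∈ D,
      ‖q.1 - p.1‖ < δ → ‖q.2 - p.2‖ < δ →
      ∀ t ∈ Icc (0:ℝ) T, ‖Φ q.1 q.2 t 0 - Φ p.1 p.2 t 0‖ ≤ ε := by
  intro p hp ε hε
  have h0T : (0:ℝ) ∈ Icc 0 T := ⟨le_rfl, hT.out.le⟩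
  set G := fun z : (Fin n → ℝ) × (Fin m → ℝ) => fderiv ℝ (fun y => M y z.2) z.1
  have hG : ContinuousOn G (K ×ˢ Kc) :=
    (ContinuousOn.fderiv_clm_apply_const hΩ hM).mono (prod_mono hKΩ (subset_univ _))
  obtain ⟨L, hL⟩ := (hK.prod hKc).exists_bound_of_continuousOn hG
  obtain ⟨η, hη, hηε⟩ := exists_pos_gronwallBound_mul_lt L T dhat hε
  obtain ⟨δ, hδ, hGδ⟩ := hK.exists_pos_forall_dist_lt_of_continuousOn_prod hKc hG hη
  refine ⟨min (δ / (2 * d)) δ, by positivity, fun q hq hq₁ hq₂ t ht => ?_⟩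
  have hclose : ∀ τ ∈ Icc (0:ℝ) T, ‖G (x q.1 q.2 τ, q.1 τ) - G (x p.1 p.2 τ, p.1 τ)‖ ≤ η := by
    intro τ hτ
    have hx : ‖x q.1 q.2 τ - x p.1 p.2 τ‖ < δ :=
      calc ‖x q.1 q.2 τ - x p.1 p.2 τ‖ ≤ d * (‖q.2 - p.2‖ + ‖q.1 - p.1‖) := hLip q hq p hp τ hτ
        _ < d * (δ / (2 * d) + δ / (2 * d)) := by
          gcongr
          exacts [hq₂.trans_le (min_le_left _ _), hq₁.trans_le (min_le_left _ _)]
        _ = δ := by field_simp; ring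
    have hu : dist (q.1 τ) (p.1 τ) < δ :=
      (ContinuousMap.dist_apply_le_dist _).trans_lt
        (by rw [dist_eq_norm]; exact hq₁.trans_le (min_le_right _ _))
    rw [← dist_eq_norm] at hx ⊢
    exact (hGδ _ (hxK q hq τ hτ) _ (huKc q hq τ) _ (hxK p hp τ hτ) _ (huKc p hp τ) hx hu).le
  -- the product of endomorphisms is their composition, so this is `hΦode` at `s = 0`
  have hode : ∀ r ∈ D, ∀ τ ∈ Icc (0:ℝ) T, HasDerivWithinAt (fun τ => Φ r.1 r.2 τ 0)
      (G (x r.1 r.2 τ, r.1 τ) * Φ r.1 r.2 τ 0) (Icc 0 T) τ :=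
    fun r hr => hΦode r hr 0 h0T
  calc ‖Φ q.1 q.2 t 0 - Φ p.1 p.2 t 0‖
      ≤ gronwallBound 0 L (η * dhat) (T - 0) :=
        norm_sub_le_gronwallBound_of_hasDerivWithinAt_mul (hode q hq) (hode p hp)
          (by rw [hΦinit q hq 0 h0T, hΦinit p hp 0 h0T])
          (fun τ hτ => hL _ ⟨hxK q hq τ hτ, huKc q hq τ⟩) hclose
          (fun τ hτ => hΦbound p hp 0 τ le_rfl hτ.1 hτ.2) t ht
    _ ≤ ε := by rw [sub_zero]; exact hηε.le

/-- Proposition 7 of the paper.  Under the uniform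
compactness, Lipschitz-in-data, and transfer-matrix bounds (i)–(iv), the
state-sensitivity matrix `(u,x₀) ↦ Φ_{u,x₀}(t;0)` is continuous in the data
`(u,x₀) ∈ D`, uniformly in `t ∈ [0,T]`. -/
theorem state_sensitivity_matrix_continuous
    {n m : ℕ} {T : ℝ} [hT : Fact (0 < T)]
    (f : (Fin m → ℝ) → (Fin n → ℝ)) (hf : ContDiff ℝ 1 f)
    (M : (Fin n → ℝ) → ((Fin m → ℝ) →L[ℝ] (Fin n → ℝ)))
    (Ω : Set (Fin n → ℝ)) (hΩ : IsOpen Ω) (hM : ContDiffOn ℝ 1 M Ω)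
    (D : Set (C(AddCircle T, Fin m → ℝ) × (Fin n → ℝ)))
    -- the family of solutions indexed by the data `(u, x₀) ∈ D`
    (x : C(AddCircle T, Fin m → ℝ) → (Fin n → ℝ) → ℝ → (Fin n → ℝ))
    (hsol : ∀ p ∈ D,
      IsBilinearSolutionOn f M Ω (fun t : ℝ => p.1 t) (x p.1 p.2) (Icc 0 T) ∧
      x p.1 p.2 0 = p.2)
    -- (i) uniform compactness of the trajectories
    (K : Set (Fin n → ℝ)) (hK : IsCompact K) (hKΩ : K ⊆ Ω)
    (hxK : ∀ p ∈ D, ∀ t ∈ Icc (0:ℝ) T, x p.1 p.2 t ∈ K)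
    -- (ii) Lipschitz dependence on the data
    (d : ℝ) (hd : 0 < d)
    (hLip : ∀ p ∈ D, ∀ q ∈ D, ∀ t ∈ Icc (0:ℝ) T,
      ‖x p.1 p.2 t - x q.1 q.2 t‖ ≤ d * (‖p.2 - q.2‖ + ‖p.1 - q.1‖))
    -- (iii) transfer matrices with a uniform bound
    (Φ : C(AddCircle T, Fin m → ℝ) → (Fin n → ℝ) → ℝ → ℝ →
      ((Fin n → ℝ) →L[ℝ] (Fin n → ℝ)))
    (hΦinit : ∀ p ∈ D, ∀ s ∈ Icc (0:ℝ) T, Φ p.1 p.2 s s = 1)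
    (hΦode : ∀ p ∈ D, ∀ s ∈ Icc (0:ℝ) T, ∀ t ∈ Icc (0:ℝ) T,
      HasDerivWithinAt (fun τ => Φ p.1 p.2 τ s)
        ((fderiv ℝ (fun y => M y (p.1 t)) (x p.1 p.2 t)).comp (Φ p.1 p.2 t s))
        (Icc 0 T) t)
    (dhat : ℝ) (hdhat : 0 < dhat)
    (hΦbound : ∀ p ∈ D, ∀ s t : ℝ, 0 ≤ s → s ≤ t → t ≤ T →
      ‖Φ p.1 p.2 t s‖ ≤ dhat)
    -- (iv) controls take values in a fixed compact set
    (Kc : Set (Fin m → ℝ)) (hKc : IsCompact Kc)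
    (huKc : ∀ p ∈ D, ∀ t : ℝ, p.1 t ∈ Kc) :
    ∀ p ∈ D, ∀ ε > 0, ∃ δ > 0, ∀ q ∈ D,
      ‖q.1 - p.1‖ < δ → ‖q.2 - p.2‖ < δ →
      ∀ t ∈ Icc (0:ℝ) T, ‖Φ q.1 q.2 t 0 - Φ p.1 p.2 t 0‖ ≤ ε :=
  state_sensitivity_matrix_continuous_general (hT := hT) M Ω hΩ hM D x K hK hKΩ hxK d hd hLip Φ
    hΦinit hΦode dhat hΦbound Kc hKc huKc
end

section
/- Let a, ω > 0 and T := 2π/ω. Suppose γ₁, γ₂ : ℝ → ℝ are differentiable, T-periodic (γᵢ(t+T) = γᵢ(t) for all t), and satisfy γ₁'(t) = −γ₁(t) + γ₂(t)² and γ₂'(t) = −γ₂(t) + a·sin(ω·t) for all t ∈ ℝ. Then (1/T)·∫₀ᵀ γ₁(t) dt = a² / ( 2·(1 + ω²) ). In particular this average is strictly positive, whereas the T-periodic solution corresponding to the zero input u ≡ 0 (which has the same average as a·sin(ω·t)) is γ₁ ≡ γ₂ ≡ 0 with zero average output. -/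
/-
The equation `γ₂' = -γ₂ + a sin (ω t)` is linear and contractive: the difference of two of its
`T`-periodic solutions solves `x' = -x`, so `eᵗ x` is constant and `x` cannot return to its value
after a period unless it vanishes. Hence `γ₂` is the explicit steady-state response
`p t = a / (1 + ω²) * (sin (ω t) - ω cos (ω t))`. Integrating `γ₁' = -γ₁ + γ₂²` over a period, the
left side vanishes by periodicity, so the mean of `γ₁` is the mean of `p²`, namely
`a² / (2 (1 + ω²))`. With zero input the same contraction argument kills `δ₂` and then `δ₁`.
-/

open Real intervalIntegral
open MeasureTheory (volume)

theorem eq_zero_of_hasDerivAt_neg {f : ℝ → ℝ} {T : ℝ} (hT : T ≠ 0)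
    (hf : ∀ t, HasDerivAt f (-f t) t) (hfT : f T = f 0) (t : ℝ) : f t = 0 := by
  have hconst : ∀ s, exp s * f s = f 0 := by
    have hderiv : ∀ s, HasDerivAt (fun s => exp s * f s) 0 s := fun s =>
      ((hasDerivAt_exp s).mul (hf s)).congr_deriv (by ring)
    intro s
    simpa using is_const_of_deriv_eq_zero (fun s => (hderiv s).differentiableAt)
      (fun s => (hderiv s).deriv) s 0
  have hf0 : f 0 = 0 := by
    have hexpT : exp T - 1 ≠ 0 := sub_ne_zero.mpr fun h => hT ((exp_eq_one_iff T).mp h)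
    have hreturn : (exp T - 1) * f 0 = 0 := by linarith [hfT ▸ hconst T]
    exact (mul_eq_zero.mp hreturn).resolve_left hexpT
  exact (mul_eq_zero.mp (hf0 ▸ hconst t)).resolve_left (exp_pos t).ne'

theorem eq_of_hasDerivAt_neg_add {x y u : ℝ → ℝ} {T : ℝ} (hT : T ≠ 0)
    (hx : ∀ t, HasDerivAt x (-x t + u t) t) (hy : ∀ t, HasDerivAt y (-y t + u t) t)
    (hxT : x T = x 0) (hyT : y T = y 0) : x = y := by
  funext t
  refine sub_eq_zero.mp (eq_zero_of_hasDerivAt_neg hT (f := x - y) (fun s => ?_) ?_ t)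
  · exact ((hx s).sub (hy s)).congr_deriv (by simp only [Pi.sub_apply]; ring)
  · simp only [Pi.sub_apply, hxT, hyT]

theorem integral_eq_integral_of_hasDerivAt_neg_add {x u : ℝ → ℝ} {a b : ℝ}
    (hx : ∀ t, HasDerivAt x (-x t + u t) t) (hu : IntervalIntegrable u volume a b)
    (hxab : x b = x a) : ∫ t in a..b, x t = ∫ t in a..b, u t := by
  have hxi : IntervalIntegrable x volume a b :=
    (continuous_iff_continuousAt.mpr fun t => (hx t).continuousAt).intervalIntegrable a b
  have hftc := integral_eq_sub_of_hasDerivAt (fun t _ => hx t) (hxi.neg.add hu)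
  rw [hxab, sub_self, integral_add (f := fun t => -x t) hxi.neg hu, integral_neg] at hftc
  linarith

theorem integral_sin_sub_mul_cos_sq (c : ℝ) :
    ∫ x in (0)..2 * π, (sin x - c * cos x) ^ 2 = π * (1 + c ^ 2) := by
  have hexpand : ∀ x, (sin x - c * cos x) ^ 2 =
      sin x ^ 2 - 2 * c * (sin x * cos x) + c ^ 2 * cos x ^ 2 := fun x => by ring
  simp_rw [hexpand]
  rw [integral_add, integral_sub, integral_const_mul, integral_const_mul, integral_sin_sq,
    integral_cos_sq, integral_sin_mul_cos₁]
  · simp only [sin_zero, cos_zero, sin_two_pi, cos_two_pi]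
    ring
  all_goals exact Continuous.intervalIntegrable (by fun_prop) _ _

noncomputable def periodicResponse (a ω t : ℝ) : ℝ :=
  a / (1 + ω ^ 2) * (sin (ω * t) - ω * cos (ω * t))

theorem hasDerivAt_periodicResponse (a ω t : ℝ) :
    HasDerivAt (periodicResponse a ω) (-periodicResponse a ω t + a * sin (ω * t)) t := by
  have hlin : HasDerivAt (fun t => ω * t) ω t := by simpa using (hasDerivAt_id t).const_mul ω
  have hprofile := ((hasDerivAt_sin _).comp t hlin).sub (((hasDerivAt_cos _).comp t hlin).const_mul ω)
  refine (hprofile.const_mul (a / (1 + ω ^ 2))).congr_deriv ?_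
  simp only [periodicResponse]
  field_simp
  ring

theorem periodicResponse_periodic (a ω : ℝ) :
    Function.Periodic (periodicResponse a ω) (2 * π / ω) := by
  intro t
  rcases eq_or_ne ω 0 with rfl | hω
  · simp
  simp only [periodicResponse, mul_add, mul_div_cancel₀ _ hω, sin_add_two_pi, cos_add_two_pi]

theorem integral_periodicResponse_sq (a : ℝ) {ω : ℝ} (hω : ω ≠ 0) :
    ∫ t in (0)..2 * π / ω, periodicResponse a ω t ^ 2 = π * a ^ 2 / (ω * (1 + ω ^ 2)) := by
  simp only [periodicResponse, mul_pow]
  rw [integral_const_mul, integral_comp_mul_left (fun x => (sin x - ω * cos x) ^ 2) hω,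
    mul_zero, mul_div_cancel₀ _ hω, integral_sin_sub_mul_cos_sq, smul_eq_mul]
  field_simp

/-- For the nonlinear contractive system
`γ₁' = −γ₁ + γ₂²`, `γ₂' = −γ₂ + a·sin(ωt)`, any `T`-periodic solution
(`T = 2π/ω`) has average output `(1/T)∫₀ᵀ γ₁ = a²/(2(1+ω²)) > 0`, whereas the
`T`-periodic solution for the zero input (same average input) is identically
zero. -/
theorem example_nonlinear_system_positive_gain_of_entrainment
    (a ω : ℝ) (ha : 0 < a) (hω : 0 < ω) (T : ℝ) (hTdef : T = 2 * Real.pi / ω)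
    (γ₁ γ₂ : ℝ → ℝ)
    (hγ₁ : ∀ t : ℝ, HasDerivAt γ₁ (-γ₁ t + (γ₂ t) ^ 2) t)
    (hγ₂ : ∀ t : ℝ, HasDerivAt γ₂ (-γ₂ t + a * Real.sin (ω * t)) t)
    (hγ₁per : ∀ t : ℝ, γ₁ (t + T) = γ₁ t)
    (hγ₂per : ∀ t : ℝ, γ₂ (t + T) = γ₂ t) :
    (1 / T) * (∫ t in (0:ℝ)..T, γ₁ t) = a ^ 2 / (2 * (1 + ω ^ 2))
    ∧ 0 < (1 / T) * (∫ t in (0:ℝ)..T, γ₁ t)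
    ∧ (∀ δ₁ δ₂ : ℝ → ℝ,
        (∀ t : ℝ, HasDerivAt δ₁ (-δ₁ t + (δ₂ t) ^ 2) t) →
        (∀ t : ℝ, HasDerivAt δ₂ (-δ₂ t) t) →
        (∀ t : ℝ, δ₁ (t + T) = δ₁ t) →
        (∀ t : ℝ, δ₂ (t + T) = δ₂ t) →
        ∀ t : ℝ, δ₁ t = 0 ∧ δ₂ t = 0) := by
  have hT : T ≠ 0 := by rw [hTdef]; positivity
  have hγ₂_eq : γ₂ = periodicResponse a ω :=
    eq_of_hasDerivAt_neg_add hT hγ₂ (hasDerivAt_periodicResponse a ω)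
      (by simpa using hγ₂per 0) (by simpa [hTdef] using periodicResponse_periodic a ω 0)
  have hγ₂_sq : IntervalIntegrable (fun t => γ₂ t ^ 2) volume 0 T :=
    ((continuous_iff_continuousAt.mpr fun t => (hγ₂ t).continuousAt).pow 2).intervalIntegrable 0 T
  have hmean : (1 / T) * ∫ t in (0)..T, γ₁ t = a ^ 2 / (2 * (1 + ω ^ 2)) := by
    rw [integral_eq_integral_of_hasDerivAt_neg_add hγ₁ hγ₂_sq (by simpa using hγ₁per 0), hγ₂_eq,
      hTdef, integral_periodicResponse_sq a hω.ne']
    field_simp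
  refine ⟨hmean, hmean ▸ by positivity, fun δ₁ δ₂ hδ₁ hδ₂ hδ₁per hδ₂per t => ?_⟩
  have hδ₂_zero : ∀ s, δ₂ s = 0 := eq_zero_of_hasDerivAt_neg hT hδ₂ (by simpa using hδ₂per 0)
  refine ⟨eq_zero_of_hasDerivAt_neg hT (fun s => ?_) (by simpa using hδ₁per 0) t, hδ₂_zero t⟩
  simpa [hδ₂_zero s] using hδ₁ s
end
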